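/- arXiv:2111.12489 — 5 statements merged into one kernel-verified Lean document; each statement's English description precedes it below -/
import Mathlib

section
/- Let C be a λ-constacyclic code of length n over F_q such that both C and its dual code C⊥ are nonzero, and suppose the minimum distance d⊥ of C⊥ satisfies d⊥ ≥ 2. Then the minimum locality of C is equal to d⊥ − 1. -/
open Polynomial

variable {F : Type} [Field F] [Fintype F] [DecidableEq F]

/-- `d` is the minimum distance (minimum Hamming weight of a nonzero codeword) of `Cset`. -/
def minDistIs {n : ℕ} (Cset : Set (Fin n → F)) (d : ℕ) : Prop :=
  IsLeast {w : ℕ | ∃ c ∈ Cset, c ≠ 0 ∧ hammingNorm c = w} d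

/-- The `i`-th code symbol of `Cset` has locality `r`. -/
def symbolLocality {n : ℕ} (Cset : Set (Fin n → F)) (i : Fin n) (r : ℕ) : Prop :=
  ∃ I : Finset (Fin n), i ∉ I ∧ I.card ≤ r ∧
    ∃ f : ({x : Fin n // x ∈ I} → F) → F, ∀ c ∈ Cset, c i = f (fun j => c j.1)

/-- `Cset` has all-symbol locality `r`. -/
def hasAllSymbolLocality {n : ℕ} (Cset : Set (Fin n → F)) (r : ℕ) : Prop :=
  ∀ i : Fin n, symbolLocality Cset i r

/-- `r` is the minimum locality of `Cset`. -/
def minLocalityIs {n : ℕ} (Cset : Set (Fin n → F)) (r : ℕ) : Prop :=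
  IsLeast {r' : ℕ | hasAllSymbolLocality Cset r'} r

/-- The λ-constacyclic code of length `n` corresponding to the ideal generated by (the image of)
`g` in `F[x]/⟨x^n − λ⟩`, viewed as a set of vectors via the coefficient identification. -/
def codeOfGen (n : ℕ) (lam : F) (g : F[X]) : Set (Fin n → F) :=
  {c | (∑ j : Fin n, Polynomial.C (c j) * X ^ (j : ℕ)) ∈ Ideal.span {g, X ^ n - Polynomial.C lam}}

/-- The code `C_i(η, p^s, λ₀)`: the λ-constacyclic code of length `η p^s`
generated by `(x^η − λ₀)^i`, where `λ = λ₀^{p^s}`. -/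
def Ci (p η s i : ℕ) (lam0 : F) : Set (Fin (η * p ^ s) → F) :=
  codeOfGen (η * p ^ s) (lam0 ^ p ^ s) ((X ^ η - Polynomial.C lam0) ^ i)

/-- The code `C_{i,j}(2p^s, λ₀)` with `λ₀ = δ²`: the λ-constacyclic code of length `2 p^s`
generated by `(x − δ)^i (x + δ)^j`, where `λ = λ₀^{p^s}`. -/
def Cij (p s i j : ℕ) (δ : F) : Set (Fin (2 * p ^ s) → F) :=
  codeOfGen (2 * p ^ s) ((δ ^ 2) ^ p ^ s) ((X - Polynomial.C δ) ^ i * (X + Polynomial.C δ) ^ j)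

/-- `V_t = Π_j (t_j + 1)` over the base-`p` digits `t_j` of `t`. -/
def Vdig (p t : ℕ) : ℕ := ((Nat.digits p t).map (· + 1)).prod

/-- Ceiling division `⌈a / b⌉` of natural numbers. -/
def nceil (a b : ℕ) : ℕ := (a + b - 1) / b

/-- `Cset` is an optimal LRC: for its dimension `k`, minimum distance `d` and minimum
locality `r`, the Singleton-like bound `d = n − k − ⌈k/r⌉ + 2` is met with equality. -/
def optimalLRC {n : ℕ} (Cset : Set (Fin n → F)) : Prop :=
  ∃ k d r : ℕ, Nat.card Cset = Fintype.card F ^ k ∧ minDistIs Cset d ∧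
    minLocalityIs Cset r ∧ (d : ℤ) = (n : ℤ) - (k : ℤ) - (nceil k r : ℤ) + 2



lemma factor_aux {K : Type} [Field K] {M : Type} [AddCommGroup M] [Module K M]
    {ι : Type} [Fintype ι] [DecidableEq ι] (ρ : M →ₗ[K] (ι → K)) (ε : M →ₗ[K] K)
    (h : LinearMap.ker ρ ≤ LinearMap.ker ε) :
    ∃ a : ι → K, ∀ x : M, ε x = ∑ j, a j * ρ x j := by
  have hρ : LinearMap.ker ((LinearMap.ker ρ).liftQ ρ le_rfl) = ⊥ :=
    Submodule.ker_liftQ_eq_bot _ _ _ le_rfl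
  obtain ⟨g, hg⟩ := LinearMap.exists_leftInverse_of_injective _ hρ
  set h' : (ι → K) →ₗ[K] K := ((LinearMap.ker ρ).liftQ ε h).comp g with hh'
  refine ⟨fun j => h' (fun k => if j = k then 1 else 0), fun x => ?_⟩
  have h1 : h' (ρ x) = ε x := by
    have h2 : ρ x = ((LinearMap.ker ρ).liftQ ρ le_rfl) ((LinearMap.ker ρ).mkQ x) := by simp
    rw [hh', h2, LinearMap.comp_apply]
    have h3 := LinearMap.congr_fun hg ((LinearMap.ker ρ).mkQ x)
    rw [LinearMap.comp_apply] at h3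
    rw [h3]
    simp
  rw [← h1, LinearMap.pi_apply_eq_sum_univ]
  exact Finset.sum_congr rfl fun j _ => by rw [smul_eq_mul, mul_comm]


open Fin.NatCast

/-- For a λ-constacyclic code `C` of length `n` over `F_q` with `C` nonzero and
dual minimum distance `d⊥ ≥ 2`, the minimum locality of `C` equals `d⊥ − 1`. -/
theorem stmt0 {p m : ℕ} (hp : p.Prime) (hm : 1 ≤ m)
    {F : Type} [Field F] [Fintype F] [DecidableEq F] (hcard : Fintype.card F = p ^ m)
    {n : ℕ} [NeZero n] (lam : F) (hlam : lam ≠ 0)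
    (Csub : Submodule F (Fin n → F))
    (hshift : ∀ c ∈ Csub,
      (fun i : Fin n => if i = 0 then lam * c (i - 1) else c (i - 1)) ∈ Csub)
    (hCnz : ∃ c ∈ Csub, c ≠ 0)
    (dperp : ℕ) (hd2 : 2 ≤ dperp)
    (hdual : minDistIs {x : Fin n → F | ∀ c ∈ Csub, ∑ i, x i * c i = 0} dperp) :
    minLocalityIs (Csub : Set (Fin n → F)) (dperp - 1) := by
  classical
  set D : Set (Fin n → F) := {x | ∀ c ∈ Csub, ∑ i, x i * c i = 0} with hD
  set S : (Fin n → F) → (Fin n → F) :=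
    fun x j => (if (j + 1 : Fin n) = 0 then lam else 1) * x (j + 1) with hS
  have hSD : ∀ x ∈ D, S x ∈ D := by
    intro x hx c hc
    have h1 := hx _ (hshift c hc)
    rw [← h1, ← Equiv.sum_comp (Equiv.addRight (1 : Fin n))
      (fun i => x i * (if i = 0 then lam * c (i - 1) else c (i - 1)))]
    refine Finset.sum_congr rfl fun j _ => ?_
    simp only [Equiv.coe_addRight, hS, add_sub_cancel_right]
    by_cases hj : (j + 1 : Fin n) = 0 <;> simp [hj] <;> ring
  have hSnz : ∀ (x : Fin n → F) (j : Fin n), S x j ≠ 0 ↔ x (j + 1) ≠ 0 := by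
    intro x j
    simp only [hS]
    rw [mul_ne_zero_iff]
    constructor
    · exact fun h => h.2
    · intro h; refine ⟨?_, h⟩; split <;> simp [hlam]
  have hSnorm : ∀ x : Fin n → F, hammingNorm (S x) ≤ hammingNorm x := by
    intro x
    refine Finset.card_le_card_of_injOn (fun j => j + 1) ?_ ?_
    · intro j hj
      simp only [Finset.coe_filter, Set.mem_setOf_eq, Finset.mem_filter, Finset.mem_univ, true_and] at hj ⊢
      exact (hSnz x j).mp hj
    · intro a _ b _ hab
      simpa using hab
  have hIter : ∀ (k : ℕ) (x : Fin n → F), x ∈ D →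
      S^[k] x ∈ D ∧ (∀ j, S^[k] x j ≠ 0 ↔ x (j + (k : Fin n)) ≠ 0) ∧
      hammingNorm (S^[k] x) ≤ hammingNorm x := by
    intro k
    induction k with
    | zero =>
      intro x hx
      simp only [Function.iterate_zero_apply, Nat.cast_zero, add_zero]
      exact ⟨hx, fun j => trivial, le_rfl⟩
    | succ k ih =>
      intro x hx
      obtain ⟨h1, h2, h3⟩ := ih x hx
      rw [Function.iterate_succ_apply']
      refine ⟨hSD _ h1, fun j => ?_, le_trans (hSnorm _) h3⟩
      rw [hSnz, h2]
      have harg : (j + 1 + (k : Fin n)) = j + ((k + 1 : ℕ) : Fin n) := by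
        push_cast; abel
      rw [harg]
  constructor
  · -- upper bound: every symbol has locality dperp - 1
    intro i
    obtain ⟨x, hxD, hxnz, hxw⟩ := hdual.1
    obtain ⟨t, hxt⟩ := Function.ne_iff.mp hxnz
    obtain ⟨hzD, hznz, hzw⟩ := hIter ((t - i : Fin n) : ℕ) x hxD
    set z := S^[((t - i : Fin n) : ℕ)] x with hz
    have hzi : z i ≠ 0 := by
      rw [hznz, Fin.cast_val_eq_self, add_sub_cancel]
      exact hxt
    set supp : Finset (Fin n) := Finset.univ.filter (fun j => z j ≠ 0) with hsupp
    have hsuppcard : supp.card = hammingNorm z := rfl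
    have hisupp : i ∈ supp := by simp [hsupp, hzi]
    set I : Finset (Fin n) := supp.erase i with hI
    refine ⟨I, Finset.notMem_erase _ _, ?_,
      fun v => - (z i)⁻¹ * ∑ j : {x : Fin n // x ∈ I}, z j.1 * v j, ?_⟩
    · rw [hI, Finset.card_erase_of_mem hisupp, hsuppcard]
      exact Nat.sub_le_sub_right (le_trans hzw (le_of_eq hxw)) 1
    · intro c hc
      have h0 := hzD c hc
      have hsum1 : ∑ j ∈ supp, z j * c j = ∑ j, z j * c j := by
        refine Finset.sum_filter_of_ne fun j _ hne => ?_
        intro hzj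
        exact hne (by rw [hzj, zero_mul])
      have hins : supp = insert i I := by
        rw [hI, Finset.insert_erase hisupp]
      have hnmem : i ∉ I := Finset.notMem_erase i supp
      have hsum2 : z i * c i + ∑ j ∈ I, z j * c j = 0 := by
        have h4 : ∑ j ∈ insert i I, z j * c j = z i * c i + ∑ j ∈ I, z j * c j :=
          Finset.sum_insert hnmem
        rw [← h4, ← hins, hsum1, h0]
      have hattach : ∑ j : {x : Fin n // x ∈ I}, z j.1 * c j.1 = ∑ j ∈ I, z j * c j :=
        Finset.sum_coe_sort I (fun j => z j * c j)
      show c i = -(z i)⁻¹ * ∑ j : {x : Fin n // x ∈ I}, z j.1 * c j.1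
      rw [hattach]
      field_simp
      linear_combination hsum2
  · -- lower bound
    intro r hr
    obtain ⟨I, hiI, hIcard, f, hf⟩ := hr (0 : Fin n)
    set ρ : Csub →ₗ[F] ({x : Fin n // x ∈ I} → F) :=
      (LinearMap.pi fun j : {x : Fin n // x ∈ I} =>
        (LinearMap.proj j.1 : (Fin n → F) →ₗ[F] F)).comp Csub.subtype with hρ
    set ε : Csub →ₗ[F] F :=
      (LinearMap.proj (0 : Fin n) : (Fin n → F) →ₗ[F] F).comp Csub.subtype with hε
    have hker : LinearMap.ker ρ ≤ LinearMap.ker ε := by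
      intro c hcker
      have hc0 : ∀ j : {x : Fin n // x ∈ I}, (c : Fin n → F) j.1 = 0 := by
        intro j
        exact congr_fun (LinearMap.mem_ker.mp hcker) j
      have e1 := hf (c : Fin n → F) c.2
      have e2 := hf (0 : Fin n → F) (Submodule.zero_mem Csub)
      have e3 : (fun j : {x : Fin n // x ∈ I} => (c : Fin n → F) j.1)
          = (fun j : {x : Fin n // x ∈ I} => (0 : Fin n → F) j.1) := by
        funext j; simp [hc0 j]
      rw [LinearMap.mem_ker]
      show (c : Fin n → F) 0 = 0
      rw [e1, e3, ← e2]
      simp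
    obtain ⟨a, ha⟩ := factor_aux ρ ε hker
    set y : Fin n → F := fun k =>
      if k = 0 then -1 else if h : k ∈ I then a ⟨k, h⟩ else 0 with hy
    have hyD : y ∈ D := by
      intro c hc
      have hsub : ∀ k ∈ Finset.univ, k ∉ insert (0 : Fin n) I → y k * c k = 0 := by
        intro k _ hk
        simp only [Finset.mem_insert, not_or] at hk
        simp [hy, hk.1, hk.2]
      rw [← Finset.sum_subset (Finset.subset_univ (insert (0 : Fin n) I)) hsub,
        Finset.sum_insert hiI]
      have hy0 : y 0 = -1 := by simp [hy]
      have hyI : ∑ j ∈ I, y j * c j = ∑ j : {x : Fin n // x ∈ I}, a j * c j.1 := by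
        rw [← Finset.sum_coe_sort I (fun j => y j * c j)]
        refine Finset.sum_congr rfl fun j _ => ?_
        have hj0 : j.1 ≠ 0 := fun h => hiI (h ▸ j.2)
        simp [hy, hj0, j.2]
      have hfac := ha ⟨c, hc⟩
      have hfac' : c 0 = ∑ j : {x : Fin n // x ∈ I}, a j * c j.1 := by
        simpa [hρ, hε] using hfac
      rw [hy0, hyI, ← hfac']
      ring
    have hymem : hammingNorm y ∈ {w : ℕ | ∃ c ∈ D, c ≠ 0 ∧ hammingNorm c = w} := by
      refine ⟨y, hyD, fun h => ?_, rfl⟩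
      have : y 0 = 0 := by rw [h]; rfl
      simp [hy] at this
    have hdle : dperp ≤ hammingNorm y := hdual.2 hymem
    have hyle : hammingNorm y ≤ I.card + 1 := by
      have hsub : Finset.univ.filter (fun k => y k ≠ 0) ⊆ insert (0 : Fin n) I := by
        intro k hk
        simp only [Finset.mem_filter, Finset.mem_univ, true_and] at hk
        by_contra hkn
        simp only [Finset.mem_insert, not_or] at hkn
        exact hk (by simp [hy, hkn.1, hkn.2])
      calc hammingNorm y ≤ (insert (0 : Fin n) I).card := Finset.card_le_card hsub
        _ ≤ I.card + 1 := Finset.card_insert_le _ _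
    omega
end

section
/- Let η be a positive integer coprime to p, s ≥ 1, λ_0 a nonzero element of F_q, and 0 ≤ i ≤ p^s − 1. Then the minimum distance of C_i(η, p^s, λ_0) equals min{V_t : i ≤ t ≤ p^s − 1}. -/
open Polynomial

variable {F : Type} [Field F] [Fintype F] [DecidableEq F]

/-!
A codeword is a polynomial `c` of degree `< η p^s` divisible by `(X^η - λ₀)^i`, and its weight is
the number of its monomials. The code contains `(X^η - λ₀)^t` for every `t ≥ i`; this is the
`η`-expansion of `(X - λ₀)^t = ∏ⱼ (X^{pʲ} - λ₀^{pʲ})^{tⱼ}`, a product of polynomials in disjoint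
digit ranges, so its weight is `V_t`.

Conversely, splitting `c = ∑_{j<η} X^j c_j(X^η)` into polyphase components, each `c_j` is divisible
by `(X - λ₀)^i` and `wt c = ∑ wt c_j`, which reduces the lower bound to `η = 1`. There one argues
by induction on `s` (Massey–Costello–Justesen): write `i = ρ + pβ` with `ρ < p` and
`c = (X^p - λ₀^p)^β c'`. The components `c_j = (X - λ₀^p)^β c'_j` of `c` fall under the induction
hypothesis with exponent `β`, and with exponent `β + 1` whenever `c'_j(λ₀^p) = 0`. If that happens
for all `j`, one nonzero component gives `t = p t'`. Otherwise, modulo `(X - λ₀)^p = X^p - λ₀^p`,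
`c'` is congruent to `∑_j c'_j(λ₀^p) X^j`, a polynomial of degree `< p` divisible by `(X - λ₀)^ρ`;
such a polynomial has more than `ρ` terms, so more than `ρ` components survive, each of weight at
least `V_{t'}`, and `t = ρ + p t'` has `V_t = (ρ + 1) V_{t'}`.
-/

theorem Vdig_zero (p : ℕ) : Vdig p 0 = 1 := by simp [Vdig]

theorem Vdig_add_mul {p r : ℕ} (hp : 1 < p) (hr : r < p) (a : ℕ) :
    Vdig p (r + p * a) = (r + 1) * Vdig p a := by
  rcases eq_or_ne r 0 with rfl | hr0
  · rcases eq_or_ne a 0 with rfl | ha0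
    · simp [Vdig_zero]
    · have h := Nat.digits_add p hp 0 a hr (.inr ha0)
      simp only [zero_add] at h
      simp [Vdig, h]
  · simp [Vdig, Nat.digits_add p hp r a hr (.inl hr0)]

theorem Vdig_mul {p : ℕ} (hp : 1 < p) (a : ℕ) : Vdig p (p * a) = Vdig p a := by
  simpa using Vdig_add_mul hp (Nat.zero_lt_of_lt hp) a

theorem Nat.add_mul_eq_add_mul_iff_of_lt {η j j' n n' : ℕ} (hj : j < η) (hj' : j' < η) :
    j + η * n = j' + η * n' ↔ j = j' ∧ n = n' := by
  refine ⟨fun h => ?_, by rintro ⟨rfl, rfl⟩; rfl⟩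
  have hη := Nat.zero_lt_of_lt hj
  obtain ⟨hn, hj⟩ := (Nat.div_mod_unique hη).2 ⟨rfl, hj⟩
  obtain ⟨hn', hj'⟩ := (Nat.div_mod_unique hη).2 ⟨h.symm, hj'⟩
  exact ⟨hj.symm.trans hj', hn.symm.trans hn'⟩

namespace Polynomial

theorem expand_X_sub_C_pow {R : Type*} [CommRing R] (η : ℕ) (a : R) (n : ℕ) :
    expand R η ((X - C a) ^ n) = (X ^ η - C a) ^ n := by
  rw [map_pow, map_sub, expand_X, expand_C]

theorem coeff_X_mul_derivative {R : Type*} [CommRing R] (f : R[X]) (k : ℕ) :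
    (X * derivative f).coeff k = k * f.coeff k := by
  cases k with
  | zero => simp
  | succ k => rw [coeff_X_mul, coeff_derivative]; push_cast; ring

section Polyphase

variable {R : Type*} [CommRing R]

noncomputable def polyphase (η j : ℕ) (c : R[X]) : R[X] :=
  ∑ n ∈ Finset.range (c.natDegree + 1), monomial n (c.coeff (j + η * n))

variable {η : ℕ}

theorem coeff_polyphase (hη : 0 < η) (j : ℕ) (c : R[X]) (n : ℕ) :
    (polyphase η j c).coeff n = c.coeff (j + η * n) := by
  simp only [polyphase, finsetSum_coeff, coeff_monomial]
  rw [Finset.sum_ite_eq', ite_eq_left_iff, Finset.mem_range]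
  intro hn
  exact (coeff_eq_zero_of_natDegree_lt (by nlinarith [Nat.le_add_left (η * n) j])).symm

theorem coeff_mul_expand_of_natDegree_lt (hη : 0 < η) {f : R[X]} (hf : f.natDegree < η)
    (g : R[X]) (M : ℕ) :
    (f * expand R η g).coeff M = f.coeff (M % η) * g.coeff (M / η) := by
  conv_lhs => rw [← Nat.mod_add_div M η]
  rw [coeff_mul, Finset.sum_eq_single (M % η, η * (M / η))]
  · simp [coeff_expand hη, Nat.mul_div_cancel_left _ hη]
  · rintro ⟨a, b⟩ hab hne
    rw [Finset.HasAntidiagonal.mem_antidiagonal] at hab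
    rcases lt_or_ge a η with ha | ha
    · rw [coeff_expand hη, if_neg, mul_zero]
      rintro ⟨k, rfl⟩
      obtain ⟨rfl, rfl⟩ := (Nat.add_mul_eq_add_mul_iff_of_lt ha (Nat.mod_lt M hη)).1 hab
      exact hne rfl
    · rw [coeff_eq_zero_of_natDegree_lt (hf.trans_le ha), zero_mul]
  · simp

theorem coeff_X_pow_mul_expand (hη : 0 < η) {j : ℕ} (hj : j < η) (g : R[X]) (M : ℕ) :
    (X ^ j * expand R η g).coeff M = if M % η = j then g.coeff (M / η) else 0 := by
  rw [coeff_mul_expand_of_natDegree_lt hη ((natDegree_X_pow_le j).trans_lt hj), coeff_X_pow]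
  split_ifs <;> simp

theorem sum_X_pow_mul_expand_polyphase (hη : 0 < η) (c : R[X]) :
    ∑ j ∈ Finset.range η, X ^ j * expand R η (polyphase η j c) = c := by
  ext M
  rw [finsetSum_coeff, Finset.sum_congr rfl fun j hj =>
    coeff_X_pow_mul_expand hη (Finset.mem_range.mp hj) _ M, Finset.sum_ite_eq,
    if_pos (Finset.mem_range.mpr (Nat.mod_lt M hη)), coeff_polyphase hη, Nat.mod_add_div]

theorem polyphase_expand_mul (hη : 0 < η) {j : ℕ} (hj : j < η) (g d : R[X]) :
    polyphase η j (expand R η g * d) = g * polyphase η j d := by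
  have hd : expand R η g * d =
      ∑ k ∈ Finset.range η, X ^ k * expand R η (g * polyphase η k d) := by
    conv_lhs => rw [← sum_X_pow_mul_expand_polyphase hη d]
    simp only [Finset.mul_sum, map_mul]
    exact Finset.sum_congr rfl fun _ _ => by ring
  ext n
  rw [coeff_polyphase hη, hd, finsetSum_coeff, Finset.sum_congr rfl fun k hk =>
    coeff_X_pow_mul_expand hη (Finset.mem_range.mp hk) _ _]
  simp [Nat.mod_eq_of_lt hj, Nat.add_mul_div_left _ _ hη, Nat.div_eq_of_lt hj, hj]

theorem exists_polyphase_ne_zero (hη : 0 < η) {c : R[X]} (hc : c ≠ 0) :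
    ∃ j < η, polyphase η j c ≠ 0 := by
  by_contra! h
  refine hc ?_
  rw [← sum_X_pow_mul_expand_polyphase hη c]
  exact Finset.sum_eq_zero fun j hj => by simp [h j (Finset.mem_range.mp hj)]

theorem degree_polyphase_lt (hη : 0 < η) {N : ℕ} {c : R[X]} (hc : c.degree < ↑(η * N))
    (j : ℕ) : (polyphase η j c).degree < N := by
  rw [degree_lt_iff_coeff_zero] at hc ⊢
  intro m hm
  rw [coeff_polyphase hη]
  exact hc _ (by nlinarith)

theorem sum_card_support_polyphase_le (hη : 0 < η) (c : R[X]) {S : Finset ℕ}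
    (hS : S ⊆ Finset.range η) :
    ∑ j ∈ S, (polyphase η j c).support.card ≤ c.support.card := by
  rw [← Finset.card_sigma]
  refine Finset.card_le_card_of_injOn (fun x => x.1 + η * x.2) (fun x hx => ?_) ?_
  · obtain ⟨-, hx⟩ := Finset.mem_sigma.mp hx
    rw [mem_support_iff, coeff_polyphase hη] at hx
    exact mem_support_iff.mpr hx
  · rintro ⟨j, n⟩ hx ⟨j', n'⟩ hx' h
    have hj := Finset.mem_range.mp (hS (Finset.mem_sigma.mp hx).1)
    have hj' := Finset.mem_range.mp (hS (Finset.mem_sigma.mp hx').1)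
    obtain ⟨rfl, rfl⟩ := (Nat.add_mul_eq_add_mul_iff_of_lt hj hj').1 h
    rfl

theorem mul_le_card_support_of_le_polyphase (hη : 0 < η) (c : R[X]) {S : Finset ℕ}
    (hS : S ⊆ Finset.range η) {m : ℕ}
    (hm : ∀ j ∈ S, m ≤ (polyphase η j c).support.card) :
    S.card * m ≤ c.support.card := by
  calc S.card * m = ∑ _j ∈ S, m := by rw [Finset.sum_const, smul_eq_mul]
    _ ≤ ∑ j ∈ S, (polyphase η j c).support.card := Finset.sum_le_sum hm
    _ ≤ c.support.card := sum_card_support_polyphase_le hη c hS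

theorem card_support_polyphase_le (hη : 0 < η) (c : R[X]) {j : ℕ} (hj : j < η) :
    (polyphase η j c).support.card ≤ c.support.card := by
  simpa using sum_card_support_polyphase_le hη c (S := {j}) (by simpa using hj)

theorem card_support_mul_expand [NoZeroDivisors R] (hη : 0 < η) {f : R[X]}
    (hf : f.natDegree < η) (g : R[X]) :
    (f * expand R η g).support.card = f.support.card * g.support.card := by
  have hlt {j : ℕ} (hj : j ∈ f.support) : j < η :=
    (le_natDegree_of_mem_supp j hj).trans_lt hf
  have hsupp : (f * expand R η g).support =
      (f.support ×ˢ g.support).image fun x => x.1 + η * x.2 := by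
    ext M
    simp only [Finset.mem_image, Finset.mem_product, Prod.exists]
    constructor
    · intro h
      rw [mem_support_iff, coeff_mul_expand_of_natDegree_lt hη hf] at h
      exact ⟨M % η, M / η, ⟨mem_support_iff.mpr (left_ne_zero_of_mul h),
        mem_support_iff.mpr (right_ne_zero_of_mul h)⟩, Nat.mod_add_div M η⟩
    · rintro ⟨j, n, ⟨hj, hn⟩, rfl⟩
      rw [mem_support_iff, coeff_mul_expand_of_natDegree_lt hη hf, Nat.add_mul_mod_self_left,
        Nat.add_mul_div_left _ _ hη, Nat.mod_eq_of_lt (hlt hj), Nat.div_eq_of_lt (hlt hj),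
        zero_add]
      exact mul_ne_zero (mem_support_iff.mp hj) (mem_support_iff.mp hn)
  rw [hsupp, Finset.card_image_of_injOn, Finset.card_product]
  rintro ⟨j, n⟩ hx ⟨j', n'⟩ hx' h
  have hj := hlt (Finset.mem_product.mp hx).1
  have hj' := hlt (Finset.mem_product.mp hx').1
  obtain ⟨rfl, rfl⟩ := (Nat.add_mul_eq_add_mul_iff_of_lt hj hj').1 h
  rfl

theorem card_support_expand [IsDomain R] (hη : 0 < η) (g : R[X]) :
    (expand R η g).support.card = g.support.card := by
  have h := card_support_mul_expand hη (f := 1) (by rwa [natDegree_one]) g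
  rwa [one_mul, ← C_1, support_C one_ne_zero, Finset.card_singleton, one_mul] at h

theorem X_pow_sub_C_dvd_sub_sum_polyphase (hη : 0 < η) (b : R) (c : R[X]) :
    X ^ η - C b ∣ c - ∑ j ∈ Finset.range η, C ((polyphase η j c).eval b) * X ^ j := by
  nth_rewrite 1 [← sum_X_pow_mul_expand_polyphase hη c]
  rw [← Finset.sum_sub_distrib]
  refine Finset.dvd_sum fun j _ => ?_
  rw [mul_comm (C _), ← mul_sub]
  refine Dvd.dvd.mul_left ?_ _
  simpa using _root_.map_dvd (expand R η) (X_sub_C_dvd_sub_C_eval (a := b) (p := polyphase η j c))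

end Polyphase

section CharP

variable {R : Type*} [CommRing R] {p : ℕ} [CharP R p]

theorem X_sub_C_pow_mul_eq_expand [Fact p.Prime] (a : R) (n : ℕ) :
    (X - C a) ^ (p * n) = expand R p ((X - C (a ^ p)) ^ n) := by
  rw [pow_mul, sub_pow_char, ← C_pow, expand_X_sub_C_pow]

theorem lt_card_support_of_X_sub_C_pow_dvd [IsDomain R] {a : R} (ha : a ≠ 0) (w : ℕ)
    {f : R[X]} (hf : f ≠ 0) (hsupp : f.support ⊆ Finset.range p) (hdvd : (X - C a) ^ w ∣ f) :
    w < f.support.card := by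
  induction w generalizing f with
  | zero => exact Finset.card_pos.mpr (support_nonempty.mpr hf)
  | succ w ih =>
  have hm := natDegree_mem_support_of_nonzero hf
  have hlt {k : ℕ} (hk : k ∈ f.support) : k < p := Finset.mem_range.mp (hsupp hk)
  set m := f.natDegree
  -- the Euler operator `X d/dX - m` kills exactly the leading term of `f`
  set f' := X * derivative f - C (m : R) * f
  have hsupp' : f'.support = f.support.erase m := by
    ext k
    rw [mem_support_iff, Finset.mem_erase, mem_support_iff, coeff_sub, coeff_X_mul_derivative,
      coeff_C_mul, ← sub_mul, mul_ne_zero_iff, sub_ne_zero, and_congr_left_iff]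
    exact fun hk => not_congr <|
      (CharP.natCast_injOn_Iio R p).eq_iff (hlt (mem_support_iff.mpr hk)) (hlt hm)
  have hdvd' : (X - C a) ^ w ∣ f' :=
    dvd_sub ((pow_sub_one_dvd_derivative_of_pow_dvd hdvd).mul_left _)
      (((pow_dvd_pow _ w.le_succ).trans hdvd).mul_left _)
  have hf' : f' ≠ 0 := by
    intro h0
    have : f.support.card = 1 := by
      rw [← Finset.card_erase_add_one hm, ← hsupp', h0, support_zero, Finset.card_empty]
    obtain ⟨k, x, hx, rfl⟩ := card_support_eq_one.mp this
    have := dvd_iff_isRoot.mp ((dvd_pow_self _ w.succ_ne_zero).trans hdvd)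
    simp [IsRoot, hx, ha] at this
  have := ih hf' (hsupp' ▸ (Finset.erase_subset _ _).trans hsupp) hdvd'
  rw [hsupp', Finset.card_erase_of_mem hm] at this
  omega

section

variable [IsDomain R] [Fact p.Prime]

theorem support_X_sub_C_pow_of_lt {a : R} (ha : a ≠ 0) {r : ℕ} (hr : r < p) :
    ((X - C a) ^ r).support = Finset.range (r + 1) := by
  ext k
  rw [sub_eq_add_neg, ← C_neg, mem_support_iff, coeff_X_add_C_pow, Finset.mem_range,
    Nat.lt_succ_iff]
  refine ⟨fun h => by_contra fun hk => h ?_, fun hk => ?_⟩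
  · rw [Nat.choose_eq_zero_of_lt (not_le.mp hk), Nat.cast_zero, mul_zero]
  · refine mul_ne_zero (pow_ne_zero _ (neg_ne_zero.mpr ha)) ?_
    rw [Ne, CharP.cast_eq_zero_iff R p]
    intro hdvd
    have : p ∣ r.factorial :=
      hdvd.trans (Dvd.intro _ (by rw [← mul_assoc, Nat.choose_mul_factorial_mul_factorial hk]))
    exact absurd ((Nat.Prime.dvd_factorial Fact.out).mp this) (not_le.mpr hr)

theorem card_support_X_sub_C_pow {a : R} (ha : a ≠ 0) (t : ℕ) :
    ((X - C a) ^ t).support.card = Vdig p t := by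
  induction t using Nat.strong_induction_on generalizing a with
  | _ t ih =>
  rcases eq_or_ne t 0 with rfl | ht
  · rw [pow_zero, ← C_1, support_C one_ne_zero, Finset.card_singleton, Vdig_zero]
  have hp := (Fact.out : p.Prime)
  have hdeg : ((X - C a) ^ (t % p)).natDegree < p := by
    rw [natDegree_pow, natDegree_X_sub_C, mul_one]
    exact Nat.mod_lt _ hp.pos
  rw [← Nat.mod_add_div t p, pow_add, X_sub_C_pow_mul_eq_expand,
    card_support_mul_expand hp.pos hdeg,
    support_X_sub_C_pow_of_lt ha (Nat.mod_lt _ hp.pos), Finset.card_range,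
    ih _ (Nat.div_lt_self (Nat.pos_of_ne_zero ht) hp.one_lt) (pow_ne_zero _ ha),
    Vdig_add_mul hp.one_lt (Nat.mod_lt _ hp.pos)]

theorem card_support_X_pow_sub_C_pow {η : ℕ} (hη : 0 < η) {a : R} (ha : a ≠ 0) (t : ℕ) :
    ((X ^ η - C a) ^ t).support.card = Vdig p t := by
  rw [← card_support_X_sub_C_pow ha, ← expand_X_sub_C_pow, card_support_expand hη]

theorem lt_card_of_eval_polyphase_ne_zero_mem {a : R} (ha : a ≠ 0)
    {ρ : ℕ} (hρ : ρ < p) {c : R[X]} (hdvd : (X - C a) ^ ρ ∣ c)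
    (hne : ∃ j < p, (polyphase p j c).eval (a ^ p) ≠ 0) {S : Finset ℕ}
    (hS : ∀ j < p, (polyphase p j c).eval (a ^ p) ≠ 0 → j ∈ S) : ρ < S.card := by
  have hp := (Fact.out : p.Prime)
  set q := ∑ j ∈ Finset.range p, C ((polyphase p j c).eval (a ^ p)) * X ^ j
  have hcoeff (k : ℕ) : q.coeff k = if k < p then (polyphase p k c).eval (a ^ p) else 0 := by
    simp only [q, finsetSum_coeff, coeff_C_mul_X_pow, Finset.sum_ite_eq, Finset.mem_range]
  have hsupp : q.support ⊆ Finset.range p := fun k hk => by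
    by_contra hkp
    rw [mem_support_iff, hcoeff, if_neg (by simpa using hkp)] at hk
    exact hk rfl
  -- `c ≡ q` modulo `X ^ p - C (a ^ p) = (X - C a) ^ p`
  have hcq : (X - C a) ^ p ∣ c - q := by
    rw [sub_pow_char, ← C_pow]
    exact X_pow_sub_C_dvd_sub_sum_polyphase hp.pos _ c
  have hdvdq : (X - C a) ^ ρ ∣ q := by
    simpa using dvd_sub hdvd ((pow_dvd_pow _ hρ.le).trans hcq)
  obtain ⟨j, hj, hjne⟩ := hne
  have hq : q ≠ 0 := fun h0 => hjne (by simpa [h0, hj] using (hcoeff j).symm)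
  refine (lt_card_support_of_X_sub_C_pow_dvd ha ρ hq hsupp hdvdq).trans_le
    (Finset.card_le_card fun k hk => ?_)
  have hkp := Finset.mem_range.mp (hsupp hk)
  rw [mem_support_iff, hcoeff, if_pos hkp] at hk
  exact hS k hkp hk

theorem exists_Vdig_le_card_support_of_polyphase {a : R} (ha : a ≠ 0) {ρ β N : ℕ}
    (hρ : ρ < p) {c c' : R[X]} (hcc' : c = expand R p ((X - C (a ^ p)) ^ β) * c')
    (hc : c ≠ 0) (hρdvd : (X - C a) ^ ρ ∣ c')
    (ih : ∀ k, ∀ j < p, polyphase p j c ≠ 0 → (X - C (a ^ p)) ^ k ∣ polyphase p j c →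
      ∃ t, k ≤ t ∧ t < N ∧ Vdig p t ≤ (polyphase p j c).support.card) :
    ∃ t, ρ + p * β ≤ t ∧ t < p * N ∧ Vdig p t ≤ c.support.card := by
  have hp := (Fact.out : p.Prime)
  have hphase {j : ℕ} (hj : j < p) : polyphase p j c = (X - C (a ^ p)) ^ β * polyphase p j c' :=
    hcc' ▸ polyphase_expand_mul hp.pos hj _ _
  by_cases hne : ∃ j < p, (polyphase p j c').eval (a ^ p) ≠ 0
  · classical
    set S := (Finset.range p).filter fun j => (polyphase p j c').eval (a ^ p) ≠ 0
    have hρS : ρ < S.card := lt_card_of_eval_polyphase_ne_zero_mem ha hρ hρdvd hne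
      fun j hj hj' => Finset.mem_filter.mpr ⟨Finset.mem_range.mpr hj, hj'⟩
    obtain ⟨j, hjS, hjmin⟩ := S.exists_min_image (fun j => (polyphase p j c).support.card)
      (Finset.card_pos.mp (by omega))
    obtain ⟨hj, hjne⟩ := Finset.mem_filter.mp hjS
    replace hj := Finset.mem_range.mp hj
    have hcj : polyphase p j c ≠ 0 := by
      rw [hphase hj]
      exact mul_ne_zero (pow_ne_zero _ (X_sub_C_ne_zero _)) fun h0 => hjne (by simp [h0])
    obtain ⟨t, hβt, htN, hVt⟩ := ih β j hj hcj (hphase hj ▸ dvd_mul_right _ _)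
    refine ⟨ρ + p * t, by nlinarith, by nlinarith, ?_⟩
    rw [Vdig_add_mul hp.one_lt hρ]
    calc (ρ + 1) * Vdig p t ≤ S.card * (polyphase p j c).support.card := Nat.mul_le_mul hρS hVt
      _ ≤ c.support.card :=
        mul_le_card_support_of_le_polyphase hp.pos c (Finset.filter_subset _ _) hjmin
  · push Not at hne
    obtain ⟨j, hj, hcj⟩ := exists_polyphase_ne_zero hp.pos hc
    have hdvdj : (X - C (a ^ p)) ^ (β + 1) ∣ polyphase p j c := by
      rw [hphase hj, pow_succ]
      exact mul_dvd_mul_left _ (dvd_iff_isRoot.mpr (hne j hj))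
    obtain ⟨t, hβt, htN, hVt⟩ := ih (β + 1) j hj hcj hdvdj
    refine ⟨p * t, by nlinarith, by nlinarith, ?_⟩
    rw [Vdig_mul hp.one_lt]
    exact hVt.trans (card_support_polyphase_le hp.pos c hj)

theorem exists_Vdig_le_card_support (s : ℕ) {a : R} (ha : a ≠ 0) {i : ℕ} {c : R[X]}
    (hc : c ≠ 0) (hdvd : (X - C a) ^ i ∣ c) (hdeg : c.degree < ↑(p ^ s)) :
    ∃ t, i ≤ t ∧ t < p ^ s ∧ Vdig p t ≤ c.support.card := by
  induction s generalizing a i c with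
  | zero =>
    rw [← natDegree_lt_iff_degree_lt hc] at hdeg
    have hi : i < 1 := by simpa using (natDegree_le_of_dvd hdvd hc).trans_lt hdeg
    refine ⟨0, by omega, by simp, ?_⟩
    rw [Vdig_zero]
    exact Finset.card_pos.mpr (support_nonempty.mpr hc)
  | succ s ih =>
  have hp := (Fact.out : p.Prime)
  obtain ⟨ρ, β, hρ, rfl⟩ : ∃ ρ β, ρ < p ∧ i = ρ + p * β :=
    ⟨i % p, i / p, Nat.mod_lt i hp.pos, (Nat.mod_add_div i p).symm⟩
  obtain ⟨c', rfl⟩ := (pow_dvd_pow (X - C a) (Nat.le_add_left (p * β) ρ)).trans hdvd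
  have hρdvd : (X - C a) ^ ρ ∣ c' := by
    rwa [add_comm, pow_add, mul_dvd_mul_iff_left (pow_ne_zero _ (X_sub_C_ne_zero a))] at hdvd
  rw [X_sub_C_pow_mul_eq_expand] at hc hdeg ⊢
  rw [pow_succ'] at hdeg ⊢
  exact exists_Vdig_le_card_support_of_polyphase ha hρ rfl hc hρdvd fun k j _ hcj hdvdj =>
    ih (pow_ne_zero p ha) hcj hdvdj (degree_polyphase_lt hp.pos hdeg j)

theorem exists_Vdig_le_card_support_of_X_pow_sub_C_pow_dvd {η : ℕ} (hη : 0 < η) (s : ℕ)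
    {a : R} (ha : a ≠ 0) {i : ℕ} {c : R[X]} (hc : c ≠ 0) (hdvd : (X ^ η - C a) ^ i ∣ c)
    (hdeg : c.degree < ↑(η * p ^ s)) :
    ∃ t, i ≤ t ∧ t < p ^ s ∧ Vdig p t ≤ c.support.card := by
  obtain ⟨d, rfl⟩ := hdvd
  obtain ⟨j, hj, hcj⟩ := exists_polyphase_ne_zero hη hc
  have hphase : polyphase η j ((X ^ η - C a) ^ i * d) = (X - C a) ^ i * polyphase η j d := by
    rw [← expand_X_sub_C_pow, polyphase_expand_mul hη hj]
  obtain ⟨t, hit, hts, hVt⟩ := exists_Vdig_le_card_support s ha hcj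
    (hphase ▸ dvd_mul_right _ _) (degree_polyphase_lt hη hdeg j)
  exact ⟨t, hit, hts, hVt.trans (card_support_polyphase_le hη _ hj)⟩

end

end CharP

section Codewords

variable {R : Type*} [Semiring R] {n : ℕ}

theorem coeff_sum_fin_C_mul_X_pow (c : Fin n → R) (k : Fin n) :
    (∑ j : Fin n, C (c j) * X ^ (j : ℕ)).coeff k = c k := by
  simp [finsetSum_coeff, Fin.val_inj]

theorem sum_fin_C_coeff_mul_X_pow {f : R[X]} (hf : f.degree < n) :
    ∑ j : Fin n, C (f.coeff j) * X ^ (j : ℕ) = f := by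
  rw [sum_fin (fun i a => C a * X ^ i) (by simp) hf, sum_C_mul_X_pow_eq]

theorem sum_fin_C_mul_X_pow_eq_zero_iff (c : Fin n → R) :
    ∑ j : Fin n, C (c j) * X ^ (j : ℕ) = 0 ↔ c = 0 := by
  refine ⟨fun h => ?_, fun h => by simp [h]⟩
  ext k
  rw [← coeff_sum_fin_C_mul_X_pow c k, h, coeff_zero, Pi.zero_apply]

theorem card_support_sum_fin_C_mul_X_pow [DecidableEq R] (c : Fin n → R) :
    (∑ j : Fin n, C (c j) * X ^ (j : ℕ)).support.card = hammingNorm c := by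
  rw [hammingNorm, ← Finset.card_map Fin.valEmbedding]
  congr 1
  ext k
  simp only [mem_support_iff, Finset.mem_map, Finset.mem_filter, Finset.mem_univ, true_and,
    Fin.valEmbedding_apply]
  constructor
  · intro hk
    have hkn : k < n := by
      by_contra hkn
      exact hk (coeff_eq_zero_of_degree_lt
        ((degree_sum_fin_lt c).trans_le (by exact_mod_cast not_lt.mp hkn)))
    exact ⟨⟨k, hkn⟩, by rwa [← coeff_sum_fin_C_mul_X_pow c], rfl⟩
  · rintro ⟨j, hj, rfl⟩
    rwa [coeff_sum_fin_C_mul_X_pow]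

end Codewords

end Polynomial

theorem weights_codeOfGen {K : Type} [Field K] [DecidableEq K] {n : ℕ} {lam : K} {g : K[X]}
    (hg : g ∣ X ^ n - C lam) :
    {w | ∃ c ∈ codeOfGen n lam g, c ≠ 0 ∧ hammingNorm c = w} =
      {w | ∃ f : K[X], f ≠ 0 ∧ g ∣ f ∧ f.degree < n ∧ f.support.card = w} := by
  have hspan : Ideal.span {g, X ^ n - C lam} = Ideal.span {g} := by
    rw [Ideal.span_insert, sup_eq_left, Ideal.span_singleton_le_span_singleton]
    exact hg
  ext w
  simp only [codeOfGen, hspan, Ideal.mem_span_singleton, Set.mem_ofPred_eq]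
  constructor
  · rintro ⟨c, hgc, hc, rfl⟩
    exact ⟨_, (sum_fin_C_mul_X_pow_eq_zero_iff c).not.mpr hc, hgc, degree_sum_fin_lt c,
      card_support_sum_fin_C_mul_X_pow c⟩
  · rintro ⟨f, hf, hgf, hdeg, rfl⟩
    have hf' := sum_fin_C_coeff_mul_X_pow hdeg
    refine ⟨fun j => f.coeff j, ?_, ?_, ?_⟩
    · rwa [hf']
    · rwa [Ne, ← sum_fin_C_mul_X_pow_eq_zero_iff, hf']
    · rw [← card_support_sum_fin_C_mul_X_pow, hf']

theorem stmt1_general {p m : ℕ} (hp : p.Prime)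
    {F : Type} [Field F] [Fintype F] [DecidableEq F] (hcard : Fintype.card F = p ^ m)
    (η : ℕ) (hη : 0 < η) (s : ℕ)
    (lam0 : F) (hlam0 : lam0 ≠ 0) (i : ℕ) (hi : i ≤ p ^ s - 1) :
    minDistIs (Ci p η s i lam0)
      (Finset.inf' (Finset.Icc i (p ^ s - 1)) (Finset.nonempty_Icc.mpr hi) (Vdig p)) := by
  have := Fact.mk hp
  have := charP_of_card_eq_prime_pow hcard
  have hdvd : (X ^ η - C lam0) ^ i ∣ X ^ (η * p ^ s) - C (lam0 ^ p ^ s) := by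
    rw [pow_mul, C_pow, ← sub_pow_char_pow]
    exact pow_dvd_pow _ (by omega)
  rw [minDistIs, Ci, weights_codeOfGen hdvd]
  obtain ⟨t, ht, hVt⟩ := Finset.exists_mem_eq_inf' (Finset.nonempty_Icc.mpr hi) (Vdig p)
  obtain ⟨hit, hts⟩ := Finset.mem_Icc.mp ht
  replace hts : t < p ^ s := by have := pow_pos hp.pos s; omega
  have hne : (X ^ η - C lam0) ^ t ≠ 0 := pow_ne_zero _ (X_pow_sub_C_ne_zero hη lam0)
  constructor
  · refine ⟨(X ^ η - C lam0) ^ t, hne, pow_dvd_pow _ hit, ?_, ?_⟩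
    · rw [← natDegree_lt_iff_degree_lt hne, natDegree_pow, natDegree_X_pow_sub_C]
      nlinarith
    · rw [hVt, card_support_X_pow_sub_C_pow hη hlam0]
  · rintro w ⟨f, hf, hgf, hdeg, rfl⟩
    obtain ⟨t, hit, hts, hVt⟩ :=
      exists_Vdig_le_card_support_of_X_pow_sub_C_pow_dvd hη s hlam0 hf hgf hdeg
    exact (Finset.inf'_le _ (Finset.mem_Icc.mpr ⟨hit, by omega⟩)).trans hVt

/-- The minimum distance of `C_i(η, p^s, λ₀)` equals
`min { V_t : i ≤ t ≤ p^s − 1 }`. -/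
theorem stmt1 {p m : ℕ} (hp : p.Prime) (hm : 1 ≤ m)
    {F : Type} [Field F] [Fintype F] [DecidableEq F] (hcard : Fintype.card F = p ^ m)
    (η : ℕ) (hη : 0 < η) (hcop : Nat.Coprime η p) (s : ℕ) (hs : 1 ≤ s)
    (lam0 : F) (hlam0 : lam0 ≠ 0) (i : ℕ) (hi : i ≤ p ^ s - 1) :
    minDistIs (Ci p η s i lam0)
      (Finset.inf' (Finset.Icc i (p ^ s - 1)) (Finset.nonempty_Icc.mpr hi) (Vdig p)) :=
  stmt1_general hp hcard η hη s lam0 hlam0 i hi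
end

section
/- Let p = 2, m ≥ 1, s ≥ 2, and let λ_0 be a nonzero element of F_{2^m}. Then the code C_{2^{s−1}+1}(1, 2^s, λ_0) is a linear code over F_{2^m} of length 2^s, dimension 2^{s−1} − 1, minimum distance 4, and minimum locality 1; in particular it is an optimal LRC, i.e., 4 = 2^s − (2^{s−1} − 1) − ⌈(2^{s−1} − 1)/1⌉ + 2. -/
open Polynomial

variable {F : Type} [Field F] [Fintype F] [DecidableEq F]

namespace Stmt3Aux
open Polynomial
variable {F : Type} [Field F]

noncomputable def Pof {t : ℕ} (c : Fin t → F) : F[X] :=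
  ∑ j : Fin t, Polynomial.C (c j) * X ^ (j : ℕ)

lemma coeff_Pof {t : ℕ} (c : Fin t → F) (j : ℕ) :
    (Pof c).coeff j = if h : j < t then c ⟨j, h⟩ else 0 := by
  classical
  rw [Pof, finset_sum_coeff]
  simp only [coeff_C_mul, coeff_X_pow, mul_ite, mul_one, mul_zero]
  split
  · rename_i h
    rw [Finset.sum_eq_single (⟨j, h⟩ : Fin t)]
    · simp
    · intro b _ hb
      simp only [ite_eq_right_iff]
      intro hj
      exact absurd (Fin.ext hj.symm) hb
    · simp
  · rename_i h
    apply Finset.sum_eq_zero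
    intro i _
    simp only [ite_eq_right_iff]
    intro hj
    exact absurd (hj ▸ i.isLt) h

lemma coeff_Pof_self {t : ℕ} (c : Fin t → F) (j : Fin t) :
    (Pof c).coeff j = c j := by
  rw [coeff_Pof]; simp

lemma coeff_Pof_of_le {t : ℕ} (c : Fin t → F) {j : ℕ} (h : t ≤ j) :
    (Pof c).coeff j = 0 := by
  rw [coeff_Pof]; simp [Nat.not_lt.mpr h]

lemma Pof_coeffs {t : ℕ} (q : F[X]) (h : ∀ j, t ≤ j → q.coeff j = 0) :
    Pof (fun j : Fin t => q.coeff j) = q := by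
  ext j
  rw [coeff_Pof]
  split
  · rfl
  · rename_i hj
    exact (h j (Nat.le_of_not_lt hj)).symm

lemma natDegree_Pof_le {t : ℕ} (c : Fin t → F) : (Pof c).natDegree ≤ t - 1 := by
  rw [natDegree_le_iff_coeff_eq_zero]
  intro j hj
  exact coeff_Pof_of_le c (by omega)

lemma Pof_zero (t : ℕ) : Pof (0 : Fin t → F) = 0 := by
  simp [Pof]

lemma mem_Ci_iff [CharP F 2] (s i : ℕ) (hi : i ≤ 2 ^ s) (lam0 : F) (c : Fin (1 * 2 ^ s) → F) :
    c ∈ Ci 2 1 s i lam0 ↔ ((X + C lam0) ^ i : F[X]) ∣ Pof c := by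
  have hg : ((X : F[X]) ^ (1 * 2 ^ s) - C (lam0 ^ 2 ^ s))
      = (X + C lam0) ^ i * (X + C lam0) ^ (2 ^ s - i) := by
    rw [← pow_add, Nat.add_sub_cancel' hi, one_mul, add_pow_char_pow, ← C_pow,
      CharTwo.sub_eq_add]
  show (Pof c ∈ Ideal.span {((X:F[X]) ^ 1 - C lam0) ^ i, X ^ (1 * 2 ^ s) - C (lam0 ^ 2 ^ s)}) ↔ _
  rw [hg, pow_one, CharTwo.sub_eq_add, Ideal.mem_span_pair]
  constructor
  · rintro ⟨u, v, huv⟩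
    exact ⟨u + v * (X + C lam0) ^ (2 ^ s - i), by rw [← huv]; ring⟩
  · rintro ⟨w, hw⟩
    exact ⟨w, 0, by rw [hw]; ring⟩

lemma hNpos {s : ℕ} (hs : 2 ≤ s) : 2 ≤ 2 ^ (s - 1) := by
  calc 2 = 2 ^ 1 := rfl
  _ ≤ 2 ^ (s - 1) := Nat.pow_le_pow_right (by norm_num) (by omega)

lemma h2s {s : ℕ} (hs : 2 ≤ s) : 2 ^ s = 2 * 2 ^ (s - 1) := by
  rw [← pow_succ']
  congr 1; omega

/-- key decomposition of a codeword -/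
lemma key [CharP F 2] {s : ℕ} (hs : 2 ≤ s) {lam0 : F}
    {c : Fin (1 * 2 ^ s) → F} (hc : c ∈ Ci 2 1 s (2 ^ (s-1) + 1) lam0) :
    ∃ a : F[X], (X + C lam0) ∣ a ∧ (∀ j, 2 ^ (s-1) ≤ j → a.coeff j = 0) ∧
      (∀ j : Fin (1 * 2 ^ s), ((j : ℕ) < 2 ^ (s-1) → c j = lam0 ^ 2 ^ (s-1) * a.coeff j) ∧
        (2 ^ (s-1) ≤ (j : ℕ) → c j = a.coeff ((j : ℕ) - 2 ^ (s-1)))) ∧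
      (c ≠ 0 → a ≠ 0) := by
  have hN2 := hNpos hs
  have h2N := h2s hs
  set N := 2 ^ (s-1) with hN
  have hi : N + 1 ≤ 2 ^ s := by omega
  rw [mem_Ci_iff s _ hi] at hc
  obtain ⟨b, hb⟩ := hc
  set a : F[X] := (X + C lam0) * b with ha
  have hXN : ((X : F[X]) + C lam0) ^ N = X ^ N + C (lam0 ^ N) := by
    rw [hN, add_pow_char_pow, ← C_pow]
  have hfac : Pof c = (X ^ N + C (lam0 ^ N)) * a := by
    rw [hb, ← hXN, ha]; ring
  have hne : ((X : F[X]) ^ N + C (lam0 ^ N)) ≠ 0 := X_pow_add_C_ne_zero (by omega) _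
  have hvan : ∀ j, N ≤ j → a.coeff j = 0 := by
    intro j hj
    by_cases hP : Pof c = 0
    · have ha0 : a = 0 := by
        rcases mul_eq_zero.mp (hfac ▸ hP) with h | h
        · exact absurd h hne
        · exact h
      simp [ha0]
    · have hane : a ≠ 0 := fun h => hP (by rw [hfac, h, mul_zero])
      have hPd : (Pof c).natDegree ≤ 1 * 2 ^ s - 1 := natDegree_Pof_le c
      rw [hfac, natDegree_mul hne hane, natDegree_X_pow_add_C] at hPd
      exact coeff_eq_zero_of_natDegree_lt (by omega)
  have hco : ∀ j : ℕ, (Pof c).coeff j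
      = (if N ≤ j then a.coeff (j - N) else 0) + lam0 ^ N * a.coeff j := by
    intro j
    rw [hfac, add_mul, coeff_add, coeff_C_mul, mul_comm ((X : F[X]) ^ N) a,
      coeff_mul_X_pow']
  refine ⟨a, Dvd.intro b rfl, hvan, ?_, ?_⟩
  · intro j
    constructor
    · intro hj
      rw [← coeff_Pof_self c j, hco, if_neg (by omega), zero_add]
    · intro hj
      rw [← coeff_Pof_self c j, hco, if_pos hj, hvan j hj, mul_zero, add_zero]
  · intro hc0 ha0
    apply hc0
    funext j
    have hh := coeff_Pof_self c j
    rw [hfac, ha0, mul_zero, coeff_zero] at hh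
    exact hh.symm

lemma zero_mem_Ci [CharP F 2] {s : ℕ} (hs : 2 ≤ s) (lam0 : F) :
    (0 : Fin (1 * 2 ^ s) → F) ∈ Ci 2 1 s (2 ^ (s-1) + 1) lam0 := by
  have hN2 := hNpos hs
  have h2N := h2s hs
  rw [mem_Ci_iff s _ (by omega), Pof_zero]
  exact dvd_zero _

/-- the weight-4 codeword -/
lemma exists_cw [DecidableEq F] [CharP F 2] {s : ℕ} (hs : 2 ≤ s) {lam0 : F} (hlam0 : lam0 ≠ 0) :
    ∃ cw : Fin (1 * 2 ^ s) → F, cw ∈ Ci 2 1 s (2 ^ (s-1) + 1) lam0 ∧ cw ≠ 0 ∧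
      hammingNorm cw = 4 := by
  classical
  have hN2 := hNpos hs
  have h2N := h2s hs
  set N := 2 ^ (s-1) with hN
  set g : F[X] := (X + C lam0) ^ (N + 1) with hg
  have hXN : ((X : F[X]) + C lam0) ^ N = X ^ N + C (lam0 ^ N) := by
    rw [hN, add_pow_char_pow, ← C_pow]
  have hgexp : g = monomial (N+1) 1 + monomial N lam0 + monomial 1 (lam0 ^ N)
      + monomial 0 (lam0 ^ N * lam0) := by
    rw [hg, pow_succ, hXN, ← X_pow_eq_monomial, ← C_mul_X_pow_eq_monomial,
      ← C_mul_X_pow_eq_monomial, ← C_mul_X_pow_eq_monomial, C_mul]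
    ring
  have hgc : ∀ j : ℕ, g.coeff j = (if N+1 = j then 1 else 0) + (if N = j then lam0 else 0)
      + (if 1 = j then lam0 ^ N else 0) + (if 0 = j then lam0 ^ N * lam0 else 0) := by
    intro j
    rw [hgexp, coeff_add, coeff_add, coeff_add, coeff_monomial, coeff_monomial,
      coeff_monomial, coeff_monomial]
  have hgdeg : g.natDegree = N + 1 := by
    rw [hg, natDegree_pow, natDegree_X_add_C, mul_one]
  refine ⟨fun j => g.coeff j, ?_, ?_, ?_⟩
  · rw [mem_Ci_iff s _ (by omega)]
    rw [Pof_coeffs g (fun j hj => coeff_eq_zero_of_natDegree_lt (by omega))]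
  · intro h
    have h1 : g.coeff (N+1) = 0 := congrFun h ⟨N+1, by omega⟩
    rw [hgc, if_pos rfl, if_neg (by omega), if_neg (by omega), if_neg (by omega)] at h1
    simp at h1
  · show (Finset.univ.filter fun j : Fin (1 * 2 ^ s) => g.coeff (j : ℕ) ≠ 0).card = 4
    have hfil : (Finset.univ.filter fun j : Fin (1 * 2 ^ s) => g.coeff (j : ℕ) ≠ 0)
        = {(⟨0, by omega⟩ : Fin (1 * 2 ^ s)), ⟨1, by omega⟩, ⟨N, by omega⟩, ⟨N+1, by omega⟩} := by
      ext j
      simp only [Finset.mem_filter, Finset.mem_univ, true_and, Finset.mem_insert,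
        Finset.mem_singleton, Fin.ext_iff]
      constructor
      · intro hj
        by_contra hcon
        push_neg at hcon
        obtain ⟨h0, h1, h2, h3⟩ := hcon
        apply hj
        rw [hgc, if_neg (by omega), if_neg (by omega), if_neg (by omega), if_neg (by omega)]
        ring
      · rintro (h | h | h | h)
        · rw [hgc, h, if_neg (by omega), if_neg (by omega), if_neg (by omega), if_pos rfl]
          simpa using mul_ne_zero (pow_ne_zero N hlam0) hlam0
        · rw [hgc, h, if_neg (by omega), if_neg (by omega), if_pos rfl, if_neg (by omega)]
          simpa using pow_ne_zero N hlam0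
        · rw [hgc, h, if_neg (by omega), if_pos rfl, if_neg (by omega), if_neg (by omega)]
          simpa using hlam0
        · rw [hgc, h, if_pos rfl, if_neg (by omega), if_neg (by omega), if_neg (by omega)]
          simp
    rw [hfil]
    rw [Finset.card_insert_of_notMem (by simp [Fin.ext_iff] <;> omega),
      Finset.card_insert_of_notMem (by simp [Fin.ext_iff] <;> omega),
      Finset.card_insert_of_notMem (by simp [Fin.ext_iff] <;> omega),
      Finset.card_singleton]

lemma dist_lb [DecidableEq F] [CharP F 2] {s : ℕ} (hs : 2 ≤ s) {lam0 : F} (hlam0 : lam0 ≠ 0)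
    {c : Fin (1 * 2 ^ s) → F} (hc : c ∈ Ci 2 1 s (2 ^ (s-1) + 1) lam0) (hc0 : c ≠ 0) :
    4 ≤ hammingNorm c := by
  classical
  have hN2 := hNpos hs
  have h2N := h2s hs
  set N := 2 ^ (s-1) with hN
  obtain ⟨a, hdvd, hvan, hcoeff, hane⟩ := key hs hc
  have ha : a ≠ 0 := hane hc0
  have hsupp2 : 2 ≤ a.support.card := by
    by_contra h
    push_neg at h
    have h0 : a.support.card ≠ 0 := by
      simp only [ne_eq, Finset.card_eq_zero, Polynomial.support_eq_empty]
      exact ha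
    have h1 : a.support.card = 1 := by omega
    obtain ⟨k, hk⟩ := Finset.card_eq_one.mp h1
    have heval : a.eval lam0 = 0 := by
      obtain ⟨w, hw⟩ := hdvd
      rw [hw, eval_mul, eval_add, eval_X, eval_C, CharTwo.add_self_eq_zero, zero_mul]
    rw [eval_eq_sum, Polynomial.sum_def, hk, Finset.sum_singleton] at heval
    have hk0 : a.coeff k ≠ 0 := Polynomial.mem_support_iff.mp (hk ▸ Finset.mem_singleton_self k)
    exact hk0 (by
      rcases mul_eq_zero.mp heval with h' | h'
      · exact h'
      · exact absurd h' (pow_ne_zero _ hlam0))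
  obtain ⟨j1, hj1, j2, hj2, hj12⟩ := Finset.one_lt_card.mp hsupp2
  have hj1c : a.coeff j1 ≠ 0 := Polynomial.mem_support_iff.mp hj1
  have hj2c : a.coeff j2 ≠ 0 := Polynomial.mem_support_iff.mp hj2
  have hj1N : j1 < N := by
    by_contra h
    exact hj1c (hvan _ (Nat.le_of_not_lt h))
  have hj2N : j2 < N := by
    by_contra h
    exact hj2c (hvan _ (Nat.le_of_not_lt h))
  set I : Finset (Fin (1 * 2 ^ s)) :=
    {⟨j1, by omega⟩, ⟨j2, by omega⟩, ⟨j1 + N, by omega⟩, ⟨j2 + N, by omega⟩} with hI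
  have hsub : I ⊆ Finset.univ.filter (fun j => c j ≠ 0) := by
    intro x hx
    simp only [hI, Finset.mem_insert, Finset.mem_singleton] at hx
    simp only [Finset.mem_filter, Finset.mem_univ, true_and]
    rcases hx with h | h | h | h <;> subst h
    · rw [(hcoeff _).1 hj1N]
      exact mul_ne_zero (pow_ne_zero _ hlam0) hj1c
    · rw [(hcoeff _).1 hj2N]
      exact mul_ne_zero (pow_ne_zero _ hlam0) hj2c
    · rw [(hcoeff _).2 (by show 2 ^ (s - 1) ≤ j1 + N; omega)]
      simpa [← hN] using hj1c
    · rw [(hcoeff _).2 (by show 2 ^ (s - 1) ≤ j2 + N; omega)]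
      simpa [← hN] using hj2c
  have hIcard : I.card = 4 := by
    rw [hI, Finset.card_insert_of_notMem (by simp [Fin.ext_iff] <;> omega),
      Finset.card_insert_of_notMem (by simp [Fin.ext_iff] <;> omega),
      Finset.card_insert_of_notMem (by simp [Fin.ext_iff] <;> omega),
      Finset.card_singleton]
  calc 4 = I.card := hIcard.symm
  _ ≤ (Finset.univ.filter (fun j => c j ≠ 0)).card := Finset.card_le_card hsub
  _ = hammingNorm c := rfl

lemma loc_ub [CharP F 2] {s : ℕ} (hs : 2 ≤ s) {lam0 : F} (hlam0 : lam0 ≠ 0) :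
    hasAllSymbolLocality (Ci 2 1 s (2 ^ (s-1) + 1) lam0) 1 := by
  have hN2 := hNpos hs
  have h2N := h2s hs
  set N := 2 ^ (s-1) with hN
  intro i
  by_cases hiN : (i : ℕ) < N
  · refine ⟨{⟨(i : ℕ) + N, by omega⟩}, ?_, by simp, ?_⟩
    · simp only [Finset.mem_singleton, Fin.ext_iff]
      omega
    · refine ⟨fun v => lam0 ^ N * v ⟨_, Finset.mem_singleton_self _⟩, ?_⟩
      intro c hc
      obtain ⟨a, _, hvan, hcoeff, _⟩ := key hs hc
      have h1 := (hcoeff i).1 hiN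
      have h2 := (hcoeff ⟨(i : ℕ) + N, by omega⟩).2 (by show 2 ^ (s - 1) ≤ (i : ℕ) + N; omega)
      simp only [← hN] at h1 h2
      show c i = lam0 ^ N * c ⟨(i : ℕ) + N, by omega⟩
      rw [h1, h2, Nat.add_sub_cancel]
  · refine ⟨{⟨(i : ℕ) - N, by omega⟩}, ?_, by simp, ?_⟩
    · simp only [Finset.mem_singleton, Fin.ext_iff]
      omega
    · refine ⟨fun v => (lam0 ^ N)⁻¹ * v ⟨_, Finset.mem_singleton_self _⟩, ?_⟩
      intro c hc
      obtain ⟨a, _, hvan, hcoeff, _⟩ := key hs hc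
      have h1 := (hcoeff i).2 (Nat.le_of_not_lt hiN)
      have h2 := (hcoeff ⟨(i : ℕ) - N, by omega⟩).1 (by simp; omega)
      simp only [← hN] at h1 h2
      show c i = (lam0 ^ N)⁻¹ * c ⟨(i : ℕ) - N, by omega⟩
      rw [h1, h2, inv_mul_cancel_left₀ (pow_ne_zero _ hlam0)]

lemma card_Ci [Fintype F] [DecidableEq F] [CharP F 2] {s : ℕ} (hs : 2 ≤ s)
    {lam0 : F} (hlam0 : lam0 ≠ 0) :
    Nat.card (Ci 2 1 s (2 ^ (s-1) + 1) lam0) = Fintype.card F ^ (2 ^ (s-1) - 1) := by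
  classical
  have hN2 := hNpos hs
  have h2N := h2s hs
  set N := 2 ^ (s-1) with hN
  set g : F[X] := (X + C lam0) ^ (N + 1) with hg
  have hgdeg : g.natDegree = N + 1 := by
    rw [hg, natDegree_pow, natDegree_X_add_C, mul_one]
  have hgne : g ≠ 0 := pow_ne_zero _ (X_add_C_ne_zero lam0)
  set ψ : (Fin (N - 1) → F) → (Fin (1 * 2 ^ s) → F) :=
    fun b j => (g * Pof b).coeff (j : ℕ) with hψ
  have hψdeg : ∀ b : Fin (N - 1) → F, (g * Pof b).natDegree ≤ 2 * N - 1 := by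
    intro b
    refine le_trans (natDegree_mul_le) ?_
    have := natDegree_Pof_le b
    omega
  have hPψ : ∀ b : Fin (N - 1) → F, Pof (ψ b) = g * Pof b := by
    intro b
    ext j
    rw [coeff_Pof]
    split
    · rfl
    · rename_i hj
      symm
      apply coeff_eq_zero_of_natDegree_lt
      have := hψdeg b
      omega
  have hinj : Function.Injective ψ := by
    intro b b' h
    have he : g * Pof b = g * Pof b' := by rw [← hPψ, ← hPψ, h]
    have he2 := mul_left_cancel₀ hgne he
    funext j
    rw [← coeff_Pof_self b j, ← coeff_Pof_self b' j, he2]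
  have hrange : Ci 2 1 s (N + 1) lam0 = Set.range ψ := by
    ext c
    rw [mem_Ci_iff s _ (by omega)]
    constructor
    · rintro ⟨b', hb'⟩
      have hb'van : ∀ j, N - 1 ≤ j → b'.coeff j = 0 := by
        intro j hj
        by_cases hP : Pof c = 0
        · have hb0 : b' = 0 := by
            rcases mul_eq_zero.mp (hb' ▸ hP) with h | h
            · exact absurd h hgne
            · exact h
          simp [hb0]
        · have hb'ne : b' ≠ 0 := fun h => hP (by rw [hb', h, mul_zero])
          have hPd := natDegree_Pof_le c
          rw [hb', natDegree_mul hgne hb'ne, hgdeg] at hPd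
          exact coeff_eq_zero_of_natDegree_lt (by omega)
      refine ⟨fun j => b'.coeff (j : ℕ), ?_⟩
      funext j
      show (g * Pof _).coeff (j : ℕ) = c j
      rw [Pof_coeffs b' hb'van, ← hb', coeff_Pof_self]
    · rintro ⟨b, rfl⟩
      exact ⟨Pof b, hPψ b⟩
  rw [hrange, Nat.card_range_of_injective hinj, Nat.card_eq_fintype_card,
    Fintype.card_fun, Fintype.card_fin]

end Stmt3Aux

/-- For `p = 2`, `s ≥ 2`, the code `C_{2^{s−1}+1}(1, 2^s, λ₀)` has length `2^s`,
dimension `2^{s−1} − 1`, minimum distance `4` and minimum locality `1`; in particular it is an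
optimal LRC: `4 = 2^s − (2^{s−1} − 1) − ⌈(2^{s−1} − 1)/1⌉ + 2`. -/


theorem stmt3 {m : ℕ} (hm : 1 ≤ m)
    {F : Type} [Field F] [Fintype F] [DecidableEq F] (hcard : Fintype.card F = 2 ^ m)
    (s : ℕ) (hs : 2 ≤ s) (lam0 : F) (hlam0 : lam0 ≠ 0) :
    Nat.card (Ci 2 1 s (2 ^ (s - 1) + 1) lam0) = (2 ^ m) ^ (2 ^ (s - 1) - 1) ∧
    minDistIs (Ci 2 1 s (2 ^ (s - 1) + 1) lam0) 4 ∧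
    minLocalityIs (Ci 2 1 s (2 ^ (s - 1) + 1) lam0) 1 ∧
    (4 : ℤ) = (2 ^ s : ℤ) - ((2 ^ (s - 1) - 1 : ℕ) : ℤ)
      - (nceil (2 ^ (s - 1) - 1) 1 : ℤ) + 2 := by
  classical
  haveI hchar : CharP F 2 := by
    obtain ⟨n, hp, hc⟩ := FiniteField.card F (ringChar F)
    have h2 : ringChar F = 2 := by
      have hdvd : ringChar F ∣ 2 ^ m := by
        rw [← hcard, hc]; exact dvd_pow_self _ n.2.ne'
      exact (Nat.prime_dvd_prime_iff_eq hp Nat.prime_two).mp (hp.dvd_of_dvd_pow hdvd)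
    exact h2 ▸ ringChar.charP F
  obtain ⟨cw, hcwmem, hcwne, hcwnorm⟩ := Stmt3Aux.exists_cw (F := F) hs hlam0 (lam0 := lam0)
  have hN2 := Stmt3Aux.hNpos hs
  have h2N := Stmt3Aux.h2s hs
  refine ⟨?_, ⟨⟨cw, hcwmem, hcwne, hcwnorm⟩, ?_⟩, ⟨Stmt3Aux.loc_ub hs hlam0, ?_⟩, ?_⟩
  · rw [Stmt3Aux.card_Ci hs hlam0, hcard]
  · rintro w ⟨c, hc, hc0, rfl⟩
    exact Stmt3Aux.dist_lb hs hlam0 hc hc0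
  · intro r' hr'
    by_contra hcon
    push_neg at hcon
    have hr0 : r' = 0 := by omega
    subst hr0
    obtain ⟨i0, hi0⟩ := Function.ne_iff.mp hcwne
    obtain ⟨I, hiI, hIcard, f, hf⟩ := hr' i0
    have hIe : I = ∅ := Finset.card_eq_zero.mp (by omega)
    subst hIe
    have e1 := hf 0 (Stmt3Aux.zero_mem_Ci hs lam0)
    have e2 := hf cw hcwmem
    have heq : (fun j : {x : Fin (1 * 2 ^ s) // x ∈ (∅ : Finset (Fin (1 * 2 ^ s)))} =>
        (0 : Fin (1 * 2 ^ s) → F) j.1) = (fun j => cw j.1) := by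
      funext j
      exact absurd j.2 (Finset.notMem_empty _)
    rw [heq] at e1
    exact hi0 (e2.trans e1.symm)
  · have h1 : nceil (2 ^ (s - 1) - 1) 1 = 2 ^ (s - 1) - 1 := by
      simp [nceil]
    rw [h1]
    have hc1 : ((2 ^ (s - 1) - 1 : ℕ) : ℤ) = (2 : ℤ) ^ (s - 1) - 1 := by
      push_cast [Nat.one_le_two_pow]
      ring
    have hc2 : (2 : ℤ) ^ s = 2 * 2 ^ (s - 1) := by
      rw [← pow_succ']
      congr 1
      omega
    rw [hc1, hc2]
    ring
end

section
/- Let p be an odd prime, m ≥ 1, s ≥ 2, and let λ_0 be a nonzero element of F_{p^m}. Then the code C_{p^{s−1}+1}(1, p^s, λ_0) is a linear code over F_{p^m} of length p^s, dimension p^s − p^{s−1} − 1, minimum distance 3, and minimum locality p − 1; in particular it is an optimal LRC, i.e., 3 = p^s − (p^s − p^{s−1} − 1) − ⌈(p^s − p^{s−1} − 1)/(p − 1)⌉ + 2. -/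
open Polynomial

variable {F : Type} [Field F] [Fintype F] [DecidableEq F]

set_option linter.unusedSectionVars false
set_option maxHeartbeats 2000000

section Aux4

noncomputable def polyOf {n : ℕ} (c : Fin n → F) : F[X] :=
  ∑ j : Fin n, Polynomial.C (c j) * X ^ (j : ℕ)

lemma coeff_polyOf {n : ℕ} (c : Fin n → F) (t : ℕ) :
    (polyOf c).coeff t = if h : t < n then c ⟨t, h⟩ else 0 := by
  rw [polyOf, finset_sum_coeff]
  simp only [coeff_C_mul, coeff_X_pow]
  split_ifs with h
  · rw [Finset.sum_eq_single (⟨t, h⟩ : Fin n)]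
    · simp
    · intro j _ hj
      have : ¬ (t = (j : ℕ)) := by
        intro e; exact hj (by apply Fin.ext; simp [e.symm])
      simp [this]
    · intro hn; exact absurd (Finset.mem_univ _) hn
  · apply Finset.sum_eq_zero
    intro j _
    have : ¬ (t = (j : ℕ)) := fun e => h (e ▸ j.2)
    simp [this]

lemma natDegree_polyOf_lt {n : ℕ} (hn : 0 < n) (c : Fin n → F) :
    (polyOf c).natDegree < n := by
  have : (polyOf c).natDegree ≤ n - 1 := by
    rw [Polynomial.natDegree_le_iff_coeff_eq_zero]
    intro N hN
    rw [coeff_polyOf]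
    rw [dif_neg (by omega)]
  omega

lemma polyOf_coeff {n : ℕ} (f : F[X]) (h : f.natDegree < n) :
    polyOf (fun j : Fin n => f.coeff (j : ℕ)) = f := by
  ext t
  rw [coeff_polyOf]
  split_ifs with ht
  · rfl
  · exact (Polynomial.coeff_eq_zero_of_natDegree_lt (by omega)).symm

lemma polyOf_eq_zero_iff {n : ℕ} (c : Fin n → F) : polyOf c = 0 ↔ c = 0 := by
  constructor
  · intro h
    funext j
    have := coeff_polyOf c (j : ℕ)
    rw [h] at this
    simp only [Polynomial.coeff_zero] at this
    rw [dif_pos j.2] at this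
    simpa using this.symm
  · intro h; subst h; simp [polyOf]

lemma charF {p m : ℕ} (hp : p.Prime) (hm : 1 ≤ m) (hcard : Fintype.card F = p ^ m) :
    CharP F p := by
  haveI : CharP F (ringChar F) := ringChar.charP F
  obtain ⟨n, hq0, hc⟩ := FiniteField.card F (ringChar F)
  have hpq : p = ringChar F := by
    have h1 : p ∣ (ringChar F) ^ (n : ℕ) := by
      rw [← hc, hcard]
      exact dvd_pow_self p (by omega)
    have := hp.dvd_of_dvd_pow h1
    exact ((Nat.prime_dvd_prime_iff_eq hp hq0).1 this)
  rw [hpq]; infer_instance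

lemma rootMultiplicity_pow'' {f : F[X]} (hf : f ≠ 0) (a : F) (e : ℕ) :
    (f ^ e).rootMultiplicity a = e * f.rootMultiplicity a := by
  induction e with
  | zero => simp
  | succ e ih =>
    rw [pow_succ, Polynomial.rootMultiplicity_mul (mul_ne_zero (pow_ne_zero _ hf) hf), ih]
    ring

lemma multiplicity_bound {p : ℕ} [CharP F p] (hp : p.Prime) {μ : F} (hμ : μ ≠ 0) :
    ∀ K M : ℕ, ∀ c : F[X], c ≠ 0 → M + c.support.card ≤ K → c.natDegree < p ^ (M + 1) →
      c.rootMultiplicity μ ≤ (c.support.card - 1) * p ^ M := by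
  intro K
  induction K with
  | zero =>
    intro M c hc hK _
    exfalso
    have : c.support.card ≠ 0 := by
      simpa [Finset.card_eq_zero, Polynomial.support_eq_empty] using hc
    omega
  | succ K ih =>
    intro M c hc hK hdeg
    -- strip trailing X power
    set v := c.natTrailingDegree with hv
    have hdvd : X ^ v ∣ c := by
      rw [Polynomial.X_pow_dvd_iff]
      intro d hd
      exact Polynomial.coeff_eq_zero_of_lt_natTrailingDegree hd
    obtain ⟨c0, hc0⟩ := hdvd
    have hc0ne : c0 ≠ 0 := by rintro rfl; simp at hc0; exact hc hc0
    have hcoeff0 : c0.coeff 0 ≠ 0 := by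
      have h1 : c.coeff v = c0.coeff 0 := by
        rw [hc0]
        simpa using Polynomial.coeff_X_pow_mul c0 v 0
      have h2 : c.coeff v ≠ 0 := by
        rw [hv]
        exact Polynomial.trailingCoeff_nonzero_iff_nonzero.2 hc
      rw [← h1]; exact h2
    -- support relation
    have hsupp : c.support = c0.support.image (· + v) := by
      ext t
      simp only [Polynomial.mem_support_iff, Finset.mem_image]
      constructor
      · intro ht
        have := ht
        rw [hc0, Polynomial.coeff_X_pow_mul'] at this
        by_cases hle : v ≤ t
        · refine ⟨t - v, ?_, by omega⟩
          rw [if_pos hle] at this; exact this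
        · rw [if_neg hle] at this; exact absurd rfl this
      · rintro ⟨d, hd, rfl⟩
        rw [hc0]
        have := Polynomial.coeff_X_pow_mul c0 v d
        rw [this]; exact hd
    have hcardeq : c.support.card = c0.support.card := by
      rw [hsupp, Finset.card_image_of_injective _ (add_left_injective v)]
    have hmult : c.rootMultiplicity μ = c0.rootMultiplicity μ := by
      rw [hc0, Polynomial.rootMultiplicity_mul (hc0 ▸ hc)]
      have : (X ^ v : F[X]).rootMultiplicity μ = 0 := by
        apply Polynomial.rootMultiplicity_eq_zero
        simp [Polynomial.IsRoot, hμ]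
      rw [this, zero_add]
    have hdeg0 : c0.natDegree < p ^ (M + 1) := by
      have : c.natDegree = v + c0.natDegree := by
        rw [hc0, Polynomial.natDegree_mul (pow_ne_zero v Polynomial.X_ne_zero) hc0ne]
        simp
      omega
    rw [hcardeq, hmult]
    -- now bound for c0 with nonzero constant coefficient
    by_cases hdeg00 : c0.natDegree = 0
    · have : c0.rootMultiplicity μ = 0 := by
        obtain ⟨a, rfl⟩ := Polynomial.natDegree_eq_zero.1 hdeg00
        exact Polynomial.rootMultiplicity_C a μ
      simp [this]
    by_cases hall : ∀ j ∈ c0.support, p ∣ j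
    -- p-th power case
    · have hder : Polynomial.derivative c0 = 0 := by
        ext k
        rw [Polynomial.coeff_derivative, Polynomial.coeff_zero]
        by_cases hk : c0.coeff (k + 1) = 0
        · rw [hk, zero_mul]
        · have : (p : ℕ) ∣ (k + 1) := hall _ (Polynomial.mem_support_iff.2 hk)
          have : ((k + 1 : ℕ) : F) = 0 := (CharP.cast_eq_zero_iff F p _).2 this
          rw [show ((k : F) + 1) = ((k + 1 : ℕ) : F) by push_cast; ring, this, mul_zero]
      have hexp : Polynomial.expand F p (Polynomial.contract p c0) = c0 :=
        Polynomial.expand_contract p hder hp.ne_zero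
      -- M ≥ 1
      have hM : 1 ≤ M := by
        by_contra hM0
        have hM0 : M = 0 := by omega
        have h1 : p ∣ c0.natDegree :=
          hall _ (Polynomial.natDegree_mem_support_of_nonzero hc0ne)
        have : p ≤ c0.natDegree := Nat.le_of_dvd (by omega) h1
        rw [hM0, pow_one] at hdeg0
        omega
      haveI : ExpChar F p := ExpChar.prime hp
      set g1 : F[X] := (Polynomial.contract p c0).map
        ((frobeniusEquiv F p).symm : F ≃+* F) with hg1
      have hmap : g1.map (frobenius F p) = Polynomial.contract p c0 := by
        rw [hg1, Polynomial.map_map]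
        rw [show (frobenius F p).comp ↑(frobeniusEquiv F p).symm = RingHom.id F from
          RingHom.ext (frobenius_apply_frobeniusEquiv_symm F p), Polynomial.map_id]
      have hpow : c0 = g1 ^ p := by
        rw [← Polynomial.map_frobenius_expand (p := p) g1, ← hexp, ← hmap, Polynomial.map_expand]
      have hg1ne : g1 ≠ 0 := by
        intro h
        rw [h, zero_pow hp.ne_zero] at hpow
        exact hc0ne hpow
      -- degree
      have hdegpow : c0.natDegree = p * g1.natDegree := by
        rw [hpow, Polynomial.natDegree_pow]
      have hdegg1 : g1.natDegree < p ^ M := by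
        have h2 : p ^ (M + 1) = p * p ^ M := by ring
        by_contra hcon
        push_neg at hcon
        have : p * p ^ M ≤ p * g1.natDegree :=
          Nat.mul_le_mul_left p hcon
        omega
      -- support card
      have hsuppg1 : g1.support = (Polynomial.contract p c0).support := by
        ext t
        simp [hg1, Polynomial.mem_support_iff, Polynomial.coeff_map,
          EmbeddingLike.map_eq_zero_iff]
      have hsuppc : c0.support = (Polynomial.contract p c0).support.image (· * p) := by
        conv_lhs => rw [← hexp]
        ext t
        simp only [Polynomial.mem_support_iff, Finset.mem_image,
          Polynomial.coeff_expand hp.pos, Polynomial.coeff_contract hp.ne_zero]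
        constructor
        · intro ht
          by_cases hdvd : p ∣ t
          · rw [if_pos hdvd] at ht
            exact ⟨t / p, ht, Nat.div_mul_cancel hdvd⟩
          · rw [if_neg hdvd] at ht; exact absurd rfl ht
        · rintro ⟨d, hd, rfl⟩
          rw [if_pos (dvd_mul_left p d), Nat.mul_div_cancel d hp.pos]
          exact hd
      have hcardg1 : c0.support.card = g1.support.card := by
        rw [hsuppc, hsuppg1,
          Finset.card_image_of_injective _ (fun a b h => by
            exact Nat.eq_of_mul_eq_mul_right hp.pos h)]
      -- apply ih
      obtain ⟨M', rfl⟩ : ∃ M', M = M' + 1 := ⟨M - 1, by omega⟩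
      have hih := ih M' g1 hg1ne (by omega) (by simpa using hdegg1)
      have hmm : c0.rootMultiplicity μ = p * g1.rootMultiplicity μ := by
        rw [hpow, rootMultiplicity_pow'' hg1ne]
      rw [hmm, hcardg1]
      calc p * g1.rootMultiplicity μ
          ≤ p * ((g1.support.card - 1) * p ^ M') := Nat.mul_le_mul_left p hih
        _ = (g1.support.card - 1) * p ^ (M' + 1) := by ring
    -- derivative case
    · push_neg at hall
      obtain ⟨j, hjs, hjp⟩ := hall
      have hj0 : j ≠ 0 := by rintro rfl; exact hjp (dvd_zero p)
      set d := Polynomial.derivative c0 with hd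
      have hdco : d.coeff (j - 1) ≠ 0 := by
        rw [hd, Polynomial.coeff_derivative]
        have h1 : c0.coeff (j - 1 + 1) ≠ 0 := by
          rw [show j - 1 + 1 = j by omega]
          exact Polynomial.mem_support_iff.1 hjs
        have h2 : ((j - 1 : ℕ) : F) + 1 ≠ 0 := by
          rw [show ((j - 1 : ℕ) : F) + 1 = ((j : ℕ) : F) by
            rw [show (j : ℕ) = (j - 1) + 1 by omega]; push_cast; ring]
          exact fun hcon => hjp ((CharP.cast_eq_zero_iff F p _).1 hcon)
        exact mul_ne_zero h1 h2
      have hdne : d ≠ 0 := fun hcon => hdco (by rw [hcon]; simp)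
      have h0s : (0 : ℕ) ∈ c0.support := Polynomial.mem_support_iff.2 hcoeff0
      have ht2 : 2 ≤ c0.support.card := by
        have : ({0, j} : Finset ℕ) ⊆ c0.support := by
          intro x hx
          rcases Finset.mem_insert.1 hx with rfl | hx
          · exact h0s
          · rw [Finset.mem_singleton.1 hx]; exact hjs
        calc 2 = ({0, j} : Finset ℕ).card := by
              rw [Finset.card_insert_of_notMem (by simp [Ne.symm hj0]), Finset.card_singleton]
          _ ≤ _ := Finset.card_le_card this
      have hsubd : d.support ⊆ (c0.support.erase 0).image (· - 1) := by
        intro k hk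
        have hk' : c0.coeff (k + 1) ≠ 0 := by
          intro hcon
          apply Polynomial.mem_support_iff.1 hk
          rw [hd, Polynomial.coeff_derivative, hcon, zero_mul]
        refine Finset.mem_image.2 ⟨k + 1, ?_, by omega⟩
        exact Finset.mem_erase.2 ⟨by omega, Polynomial.mem_support_iff.2 hk'⟩
      have hcardd : d.support.card ≤ c0.support.card - 1 := by
        calc d.support.card ≤ ((c0.support.erase 0).image (· - 1)).card :=
              Finset.card_le_card hsubd
          _ ≤ (c0.support.erase 0).card := Finset.card_image_le
          _ = c0.support.card - 1 := Finset.card_erase_of_mem h0s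
      have hdegd : d.natDegree < p ^ (M + 1) := by
        have h1 := Polynomial.natDegree_derivative_lt (p := c0) hdeg00
        rw [← hd] at h1
        omega
      have hih := ih M d hdne (by omega) hdegd
      have hstep : c0.rootMultiplicity μ ≤ d.rootMultiplicity μ + 1 := by
        have h1 := Polynomial.rootMultiplicity_sub_one_le_derivative_rootMultiplicity_of_ne_zero
          c0 μ (hd ▸ hdne)
        rw [← hd] at h1
        omega
      have hpM : 1 ≤ p ^ M := Nat.one_le_pow _ _ hp.pos
      calc c0.rootMultiplicity μ ≤ d.rootMultiplicity μ + 1 := hstep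
        _ ≤ (d.support.card - 1) * p ^ M + 1 := by omega
        _ ≤ (c0.support.card - 2) * p ^ M + 1 := by
            have : d.support.card - 1 ≤ c0.support.card - 2 := by omega
            exact Nat.add_le_add_right (Nat.mul_le_mul_right _ this) 1
        _ ≤ (c0.support.card - 1) * p ^ M := by
            rw [show c0.support.card - 1 = (c0.support.card - 2) + 1 by omega,
              add_mul, one_mul]
            omega

lemma pow_le_pow_s {p : ℕ} (hp : 2 ≤ p) {s : ℕ} (hs : 1 ≤ s) :
    p ^ (s - 1) + 1 ≤ p ^ s := by
  have e : p ^ s = p * p ^ (s - 1) := by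
    conv_lhs => rw [show s = (s-1) + 1 by omega]
    rw [pow_succ]; ring
  have h1 : 1 ≤ p ^ (s - 1) := Nat.one_le_pow _ _ (by omega)
  calc p ^ (s-1) + 1 ≤ 2 * p ^ (s-1) := by omega
    _ ≤ p * p ^ (s-1) := Nat.mul_le_mul_right _ hp
    _ = p ^ s := e.symm

lemma mem_Ci_iff {p : ℕ} [CharP F p] (hp : p.Prime) {s : ℕ} (hs : 1 ≤ s) (lam0 : F)
    (c : Fin (1 * p ^ s) → F) :
    c ∈ Ci p 1 s (p ^ (s - 1) + 1) lam0 ↔ (X - C lam0) ^ (p ^ (s - 1) + 1) ∣ polyOf c := by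
  haveI : Fact p.Prime := ⟨hp⟩
  have hfact : (X : F[X]) ^ (1 * p ^ s) - C (lam0 ^ p ^ s) = (X - C lam0) ^ (p ^ s) := by
    rw [one_mul, sub_pow_char_pow, map_pow]
  have hle : p ^ (s - 1) + 1 ≤ p ^ s := pow_le_pow_s hp.two_le hs
  have hgd : ((X : F[X]) - C lam0) ^ (p ^ (s - 1) + 1) ∣
      X ^ (1 * p ^ s) - C (lam0 ^ p ^ s) := by
    rw [hfact]
    exact pow_dvd_pow _ hle
  simp only [Ci, codeOfGen, Set.mem_setOf_eq, pow_one]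
  have hsum : (∑ j : Fin (1 * p ^ s), Polynomial.C (c j) * X ^ (j : ℕ)) = polyOf c := rfl
  rw [hsum, Ideal.mem_span_pair]
  constructor
  · rintro ⟨a, b, hab⟩
    rw [← hab]
    exact dvd_add (Dvd.dvd.mul_left dvd_rfl a) (Dvd.dvd.mul_left hgd b)
  · rintro ⟨w, hw⟩
    exact ⟨w, 0, by rw [hw]; ring⟩

lemma card_Ci {p : ℕ} [CharP F p] (hp : p.Prime) (hp3 : 3 ≤ p) {s : ℕ} (hs : 1 ≤ s) (lam0 : F) :
    Nat.card (Ci p 1 s (p ^ (s - 1) + 1) lam0) =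
      Fintype.card F ^ (p ^ s - p ^ (s - 1) - 1) := by
  have hle : p ^ (s - 1) + 1 ≤ p ^ s := pow_le_pow_s hp.two_le hs
  have h1 : 1 ≤ p ^ (s - 1) := Nat.one_le_pow _ _ hp.pos
  set n := 1 * p ^ s with hn
  set i0 := p ^ (s - 1) + 1 with hi0
  set k := p ^ s - p ^ (s - 1) - 1 with hk
  have hik : i0 + k = p ^ s := by omega
  have hk1 : 1 ≤ k := by
    have h2 : p ^ (s - 1) * 3 ≤ p ^ (s - 1) * p := Nat.mul_le_mul_left _ hp3
    have e : p ^ s = p ^ (s - 1) * p := by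
      conv_lhs => rw [show s = (s-1) + 1 by omega]
      rw [pow_succ]
    rw [← e] at h2
    rw [hk]
    omega
  have hnpos : 0 < n := by omega
  set g : F[X] := (X - C lam0) ^ i0 with hg
  have hgmonic : g.Monic := (monic_X_sub_C lam0).pow i0
  have hgne : g ≠ 0 := hgmonic.ne_zero
  have hdegg : g.natDegree = i0 := by
    rw [hg, Polynomial.natDegree_pow, Polynomial.natDegree_X_sub_C, mul_one]
  set Φ : (Fin k → F) → (Fin n → F) := fun u j => (g * polyOf u).coeff (j : ℕ) with hΦ
  have hdeg : ∀ u : Fin k → F, (g * polyOf u).natDegree < n := by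
    intro u
    calc (g * polyOf u).natDegree ≤ g.natDegree + (polyOf u).natDegree :=
          Polynomial.natDegree_mul_le
      _ < i0 + k := by
          have := natDegree_polyOf_lt (by omega) u
          omega
      _ = n := by omega
  have hpolyΦ : ∀ u, polyOf (Φ u) = g * polyOf u := fun u => polyOf_coeff _ (hdeg u)
  have hmem : ∀ u, Φ u ∈ Ci p 1 s (p ^ (s - 1) + 1) lam0 := by
    intro u
    rw [mem_Ci_iff hp hs, hpolyΦ]
    exact Dvd.intro _ rfl
  have hinj : Function.Injective Φ := by
    intro u1 u2 h
    have h2 : g * polyOf u1 = g * polyOf u2 := by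
      rw [← hpolyΦ, ← hpolyΦ, h]
    have h3 : polyOf u1 = polyOf u2 := mul_left_cancel₀ hgne h2
    funext j
    have := congrArg (fun f => Polynomial.coeff f (j : ℕ)) h3
    simpa [coeff_polyOf, dif_pos j.2] using this
  have hsurj : ∀ c ∈ Ci p 1 s (p ^ (s - 1) + 1) lam0, ∃ u, Φ u = c := by
    intro c hc
    rw [mem_Ci_iff hp hs] at hc
    obtain ⟨u, hu⟩ := hc
    by_cases hu0 : u = 0
    · refine ⟨0, ?_⟩
      have hc0 : polyOf c = 0 := by rw [hu, hu0, mul_zero]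
      have : c = 0 := (polyOf_eq_zero_iff c).1 hc0
      funext j
      rw [this]
      show (g * polyOf (0 : Fin k → F)).coeff (j : ℕ) = 0
      rw [(polyOf_eq_zero_iff (0 : Fin k → F)).2 rfl, mul_zero]
      simp
    · have hcne : polyOf c ≠ 0 := by
        rw [hu]; exact mul_ne_zero hgne hu0
      have hdegu : u.natDegree < k := by
        have h4 : (polyOf c).natDegree = i0 + u.natDegree := by
          rw [hu, Polynomial.natDegree_mul hgne hu0, hdegg]
        have h5 := natDegree_polyOf_lt hnpos c
        omega
      refine ⟨fun j => u.coeff (j : ℕ), ?_⟩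
      funext j
      show (g * polyOf (fun j : Fin k => u.coeff (j : ℕ))).coeff (j : ℕ) = c j
      rw [polyOf_coeff u hdegu, ← hu, coeff_polyOf, dif_pos j.2]
  have hbij : Function.Bijective
      (fun u => (⟨Φ u, hmem u⟩ : Ci p 1 s (p ^ (s - 1) + 1) lam0)) := by
    constructor
    · intro u1 u2 h
      exact hinj (congrArg Subtype.val h)
    · rintro ⟨c, hc⟩
      obtain ⟨u, hu⟩ := hsurj c hc
      exact ⟨u, Subtype.ext hu⟩
  rw [← Nat.card_eq_of_bijective _ hbij]
  simp [Nat.card_eq_fintype_card]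

lemma hammingNorm_eq {n : ℕ} (c : Fin n → F) :
    hammingNorm c = (Finset.univ.filter (fun i => c i ≠ 0)).card := rfl

lemma support_card_le {n : ℕ} (c : Fin n → F) :
    (polyOf c).support.card ≤ hammingNorm c := by
  rw [hammingNorm_eq]
  have hsub : (polyOf c).support ⊆
      (Finset.univ.filter (fun i => c i ≠ 0)).image Fin.val := by
    intro t ht
    rw [Polynomial.mem_support_iff, coeff_polyOf] at ht
    by_cases h : t < n
    · rw [dif_pos h] at ht
      exact Finset.mem_image.2 ⟨⟨t, h⟩, Finset.mem_filter.2 ⟨Finset.mem_univ _, ht⟩, rfl⟩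
    · rw [dif_neg h] at ht; exact absurd rfl ht
  calc (polyOf c).support.card
      ≤ ((Finset.univ.filter (fun i => c i ≠ 0)).image Fin.val).card :=
        Finset.card_le_card hsub
    _ = (Finset.univ.filter (fun i => c i ≠ 0)).card :=
        Finset.card_image_of_injective _ Fin.val_injective

lemma wt_lower {p : ℕ} [CharP F p] (hp : p.Prime) {s : ℕ} (hs : 2 ≤ s) {lam0 : F}
    (hl : lam0 ≠ 0) {c : Fin (1 * p ^ s) → F}
    (hc : c ∈ Ci p 1 s (p ^ (s - 1) + 1) lam0) (hc0 : c ≠ 0) : 3 ≤ hammingNorm c := by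
  rw [mem_Ci_iff hp (by omega) lam0] at hc
  have hpoly : polyOf c ≠ 0 := fun h => hc0 ((polyOf_eq_zero_iff c).1 h)
  have hmul : p ^ (s - 1) + 1 ≤ (polyOf c).rootMultiplicity lam0 := by
    rw [Polynomial.le_rootMultiplicity_iff hpoly]
    exact hc
  have hdeg : (polyOf c).natDegree < p ^ ((s - 1) + 1) := by
    have h1 := natDegree_polyOf_lt (n := 1 * p ^ s)
      (by rw [one_mul]; exact pow_pos hp.pos s) c
    have e : s - 1 + 1 = s := by omega
    rw [e]
    omega
  have hbound := multiplicity_bound hp hl ((s - 1) + (polyOf c).support.card) (s - 1)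
    (polyOf c) hpoly (le_refl _) hdeg
  set t := (polyOf c).support.card with htdef
  have ht3 : 3 ≤ t := by
    by_contra hcon
    push_neg at hcon
    have h2 : (t - 1) * p ^ (s - 1) ≤ 1 * p ^ (s - 1) :=
      Nat.mul_le_mul_right _ (by omega)
    rw [one_mul] at h2
    omega
  exact le_trans ht3 (support_card_le c)

lemma exists_wt3 {p : ℕ} [CharP F p] (hp : p.Prime) (hp2 : p ≠ 2) {s : ℕ} (hs : 2 ≤ s)
    {lam0 : F} (hl : lam0 ≠ 0) :
    ∃ c ∈ Ci p 1 s (p ^ (s - 1) + 1) lam0, c ≠ 0 ∧ hammingNorm c = 3 := by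
  haveI : Fact p.Prime := ⟨hp⟩
  have hp3 : 3 ≤ p := by
    have := hp.two_le; omega
  set q' := p ^ (s - 1) with hq'
  have hq3 : 3 ≤ q' := le_trans hp3 (Nat.le_self_pow (by omega) p)
  have hps : p ^ s = q' * p := by
    conv_lhs => rw [show s = (s - 1) + 1 by omega]
    rw [pow_succ]
  have h2q : q' + q' < p ^ s := by
    have : q' * 3 ≤ q' * p := Nat.mul_le_mul_left _ hp3
    omega
  set n := 1 * p ^ s with hn
  have hnn : n = p ^ s := one_mul _
  have hnpos : 0 < n := by omega
  set f3 : F[X] := (X - C lam0) ^ (q' + q') with hf3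
  have hdegf3 : f3.natDegree = q' + q' := by
    rw [hf3, Polynomial.natDegree_pow, Polynomial.natDegree_X_sub_C, mul_one]
  have hdegf3' : f3.natDegree < n := by omega
  set c3 : Fin n → F := fun j => f3.coeff (j : ℕ) with hc3
  have hpoly3 : polyOf c3 = f3 := polyOf_coeff f3 hdegf3'
  have hmem : c3 ∈ Ci p 1 s (p ^ (s - 1) + 1) lam0 := by
    rw [mem_Ci_iff hp (by omega) lam0, hpoly3, hf3]
    exact pow_dvd_pow _ (by omega)
  have hc3ne : c3 ≠ 0 := by
    intro h
    have h0 : c3 ⟨q' + q', by omega⟩ = 0 := by rw [h]; rfl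
    have h1 : f3.coeff (q' + q') = 1 := by
      have hm : f3.Monic := (monic_X_sub_C lam0).pow _
      have h2 := hm.coeff_natDegree
      rwa [hdegf3] at h2
    rw [hc3] at h0
    simp only at h0
    rw [h1] at h0
    exact one_ne_zero h0
  set b := lam0 ^ q' with hb
  have hexp : f3 = X ^ (q' + q') - C (b + b) * X ^ q' + C (b * b) := by
    have h1 : ((X : F[X]) - C lam0) ^ q' = X ^ q' - C b := by
      rw [hq', sub_pow_char_pow, hb, hq', map_pow]
    have h2 : f3 = ((X - C lam0) ^ q') * ((X - C lam0) ^ q') := by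
      rw [hf3, ← pow_add]
    rw [h2, h1, map_add, map_mul]
    ring
  have hwt3 : hammingNorm c3 ≤ 3 := by
    rw [hammingNorm_eq]
    set j0 : Fin n := ⟨0, hnpos⟩
    set j1 : Fin n := ⟨q', by omega⟩
    set j2 : Fin n := ⟨q' + q', by omega⟩
    have hsub : (Finset.univ.filter (fun i => c3 i ≠ 0)) ⊆ {j0, j1, j2} := by
      intro j hj
      have hco : f3.coeff (j : ℕ) ≠ 0 := (Finset.mem_filter.1 hj).2
      by_contra hnot
      simp only [Finset.mem_insert, Finset.mem_singleton] at hnot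
      push_neg at hnot
      obtain ⟨h0, h1, h2⟩ := hnot
      have hv0 : (j : ℕ) ≠ 0 := fun e => h0 (Fin.ext e)
      have hv1 : (j : ℕ) ≠ q' := fun e => h1 (Fin.ext e)
      have hv2 : (j : ℕ) ≠ q' + q' := fun e => h2 (Fin.ext e)
      apply hco
      rw [hexp]
      simp only [Polynomial.coeff_add, Polynomial.coeff_sub, Polynomial.coeff_X_pow,
        Polynomial.coeff_C_mul, Polynomial.coeff_C,
        if_neg hv2, if_neg hv1, if_neg hv0]
      ring
    calc (Finset.univ.filter (fun i => c3 i ≠ 0)).card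
        ≤ ({j0, j1, j2} : Finset (Fin n)).card := Finset.card_le_card hsub
      _ ≤ ({j1, j2} : Finset (Fin n)).card + 1 := Finset.card_insert_le _ _
      _ ≤ 3 := by
          have h4 := Finset.card_insert_le j1 ({j2} : Finset (Fin n))
          simp only [Finset.card_singleton] at h4
          omega
  have hwt3' : 3 ≤ hammingNorm c3 := wt_lower hp hs hl hmem hc3ne
  exact ⟨c3, hmem, hc3ne, by omega⟩

lemma parity {p : ℕ} [CharP F p] (hp : p.Prime) {s : ℕ} (hs : 2 ≤ s) {lam0 : F}
    {c : Fin (1 * p ^ s) → F}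
    (hc : c ∈ Ci p 1 s (p ^ (s - 1) + 1) lam0) {j : ℕ} (hj : j < p ^ (s - 1))
    (idx : ℕ → Fin (1 * p ^ s)) (hidx : ∀ t < p, ((idx t) : ℕ) = j + t * p ^ (s - 1)) :
    ∑ t ∈ Finset.range p, (lam0 ^ p ^ (s - 1)) ^ t * c (idx t) = 0 := by
  haveI : Fact p.Prime := ⟨hp⟩
  set q' := p ^ (s - 1) with hq'
  set a := lam0 ^ q' with ha
  have hq'pos : 0 < q' := pow_pos hp.pos _
  have hp1 : 1 ≤ p := hp.one_le
  have hps : p ^ s = q' * p := by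
    conv_lhs => rw [show s = (s - 1) + 1 by omega]
    rw [pow_succ]
  rw [mem_Ci_iff hp (by omega) lam0] at hc
  have hdvd : ((X : F[X]) ^ q' - C a) ∣ polyOf c := by
    have h1 : ((X : F[X]) - C lam0) ^ q' = X ^ q' - C a := by
      rw [hq', sub_pow_char_pow, ha, hq', map_pow]
    calc ((X : F[X]) ^ q' - C a) = (X - C lam0) ^ q' := h1.symm
      _ ∣ (X - C lam0) ^ (q' + 1) := pow_dvd_pow _ (by omega)
      _ ∣ polyOf c := hc
  obtain ⟨u, hu⟩ := hdvd
  set U : ℕ → F := fun t => u.coeff (j + t * q') with hU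
  have hUtop : U (p - 1) = 0 := by
    by_cases hu0 : u = 0
    · rw [hU]; simp [hu0]
    have hdegu : u.natDegree < (p - 1) * q' := by
      have h1 : (polyOf c).natDegree < 1 * p ^ s :=
        natDegree_polyOf_lt (by rw [one_mul]; exact pow_pos hp.pos s) c
      have h2 : (polyOf c).natDegree = q' + u.natDegree := by
        rw [hu, Polynomial.natDegree_mul _ hu0]
        · congr 1
          have h6 : ((X : F[X]) ^ q' - C a).natDegree = q' := by
            apply Polynomial.natDegree_X_pow_sub_C
          exact h6
        · intro h
          have h5 := congrArg (fun f => Polynomial.coeff f q') h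
          simp only [Polynomial.coeff_sub, Polynomial.coeff_X_pow, if_pos rfl,
            Polynomial.coeff_zero, Polynomial.coeff_C,
            if_neg (by omega : ¬ q' = 0)] at h5
          norm_num at h5
      have h3 : q' + (p - 1) * q' = q' * p := by
        have h4 : (1 + (p - 1)) * q' = p * q' := by congr 1; omega
        calc q' + (p - 1) * q' = (1 + (p - 1)) * q' := by rw [add_mul, one_mul]
          _ = p * q' := h4
          _ = q' * p := Nat.mul_comm _ _
      omega
    rw [hU]
    apply Polynomial.coeff_eq_zero_of_natDegree_lt
    omega
  have hcoeff : ∀ t < p, c (idx t) =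
      (if t = 0 then 0 else U (t - 1)) - a * U t := by
    intro t ht
    have hlt : j + t * q' < 1 * p ^ s := by
      have h1 : (t + 1) * q' ≤ p * q' := Nat.mul_le_mul_right _ (by omega)
      have h2 : (t + 1) * q' = t * q' + q' := by rw [add_mul, one_mul]
      have h3 : p * q' = q' * p := Nat.mul_comm _ _
      omega
    have hidx' : idx t = ⟨j + t * q', hlt⟩ := Fin.ext (by rw [hidx t ht])
    have h1 : c (idx t) = (polyOf c).coeff (j + t * q') := by
      rw [coeff_polyOf, dif_pos hlt, hidx']
    rw [h1, hu, sub_mul, Polynomial.coeff_sub, Polynomial.coeff_X_pow_mul',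
      Polynomial.coeff_C_mul]
    congr 1
    · by_cases h3 : t = 0
      · subst h3
        rw [if_pos rfl, if_neg (by simpa using (by omega : ¬ q' ≤ j))]
      · have hq'le : q' ≤ t * q' := Nat.le_mul_of_pos_left _ (by omega)
        have h5 : j + t * q' - q' = j + (t - 1) * q' := by
          have h4 : ((t - 1) + 1) * q' = t * q' := by congr 1; omega
          rw [add_mul, one_mul] at h4
          omega
        rw [if_pos (by omega), if_neg h3, h5]
  have hsplit : ∑ t ∈ Finset.range p, a ^ t * c (idx t) =
      (∑ t ∈ Finset.range p, a ^ t * (if t = 0 then 0 else U (t - 1))) -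
      (∑ t ∈ Finset.range p, a ^ (t + 1) * U t) := by
    rw [← Finset.sum_sub_distrib]
    apply Finset.sum_congr rfl
    intro t ht
    rw [hcoeff t (Finset.mem_range.1 ht)]
    ring
  rw [hsplit]
  have hfirst : (∑ t ∈ Finset.range p, a ^ t * (if t = 0 then 0 else U (t - 1))) =
      ∑ t ∈ Finset.range (p - 1), a ^ (t + 1) * U t := by
    have hpp : p = (p - 1) + 1 := by omega
    conv_lhs => rw [hpp, Finset.sum_range_succ']
    simp
  have hsecond : (∑ t ∈ Finset.range p, a ^ (t + 1) * U t) =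
      ∑ t ∈ Finset.range (p - 1), a ^ (t + 1) * U t := by
    have hpp : p = (p - 1) + 1 := by omega
    conv_lhs => rw [hpp, Finset.sum_range_succ]
    rw [hUtop, mul_zero, add_zero]
  rw [hfirst, hsecond, sub_self]

lemma loc_upper {p : ℕ} [CharP F p] (hp : p.Prime) {s : ℕ} (hs : 2 ≤ s) {lam0 : F}
    (hl : lam0 ≠ 0) :
    hasAllSymbolLocality (Ci p 1 s (p ^ (s - 1) + 1) lam0) (p - 1) := by
  intro i
  haveI : Fact p.Prime := ⟨hp⟩
  set q' := p ^ (s - 1) with hq'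
  set a := lam0 ^ q' with ha
  have hane : a ≠ 0 := pow_ne_zero _ hl
  have hq'pos : 0 < q' := pow_pos hp.pos _
  have hp1 : 1 ≤ p := hp.one_le
  have hps : p ^ s = q' * p := by
    conv_lhs => rw [show s = (s - 1) + 1 by omega]
    rw [pow_succ]
  have hnpos : 0 < 1 * p ^ s := by
    rw [one_mul]; exact pow_pos hp.pos s
  set j := (i : ℕ) % q' with hj
  set t0 := (i : ℕ) / q' with ht0
  have hjlt : j < q' := Nat.mod_lt _ hq'pos
  have hi_eq : (i : ℕ) = j + t0 * q' := by
    rw [hj, ht0]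
    exact (Nat.mod_add_div' _ _).symm
  have ht0lt : t0 < p := by
    rw [ht0, Nat.div_lt_iff_lt_mul hq'pos]
    calc (i : ℕ) < 1 * p ^ s := i.2
      _ = q' * p := by rw [one_mul, hps]
      _ = p * q' := Nat.mul_comm _ _
  set e : ℕ → Fin (1 * p ^ s) := fun t => ⟨(j + t * q') % (1 * p ^ s),
    Nat.mod_lt _ hnpos⟩ with he
  have heval : ∀ t < p, ((e t) : ℕ) = j + t * q' := by
    intro t ht
    rw [he]
    apply Nat.mod_eq_of_lt
    have h1 : (t + 1) * q' ≤ p * q' := Nat.mul_le_mul_right _ (by omega)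
    have h2 : (t + 1) * q' = t * q' + q' := by rw [add_mul, one_mul]
    have h3 : p * q' = q' * p := Nat.mul_comm _ _
    omega
  have hinj : ∀ t1 < p, ∀ t2 < p, e t1 = e t2 → t1 = t2 := by
    intro t1 h1 t2 h2 hee
    have h6 : ((e t1) : ℕ) = ((e t2) : ℕ) := congrArg Fin.val hee
    rw [heval t1 h1, heval t2 h2] at h6
    have h7 : t1 * q' = t2 * q' := by omega
    exact Nat.eq_of_mul_eq_mul_right hq'pos h7
  have het0 : e t0 = i := by
    apply Fin.ext
    rw [heval t0 ht0lt, hi_eq]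
  set I : Finset (Fin (1 * p ^ s)) := ((Finset.range p).erase t0).image e with hI
  have hiI : i ∉ I := by
    rw [hI]
    intro hmem
    obtain ⟨t, htm, hte⟩ := Finset.mem_image.1 hmem
    have ht : t ∈ Finset.range p := Finset.mem_erase.1 htm |>.2
    have htne : t ≠ t0 := Finset.mem_erase.1 htm |>.1
    exact htne (hinj t (Finset.mem_range.1 ht) t0 ht0lt (by rw [hte, het0]))
  have hcard : I.card ≤ p - 1 := by
    calc I.card ≤ ((Finset.range p).erase t0).card := Finset.card_image_le
      _ = p - 1 := by
          rw [Finset.card_erase_of_mem (Finset.mem_range.2 ht0lt), Finset.card_range]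
  refine ⟨I, hiI, hcard, fun v => -(a ^ t0)⁻¹ *
    ∑ x : {x : Fin (1 * p ^ s) // x ∈ I}, a ^ ((x : ℕ) / q') * v x, ?_⟩
  intro c hc
  have hpar := parity hp hs hc hjlt e heval
  -- rewrite the subtype sum
  have hsum1 : (∑ x : {x : Fin (1 * p ^ s) // x ∈ I}, a ^ (((x : Fin (1 * p ^ s)) : ℕ) / q') * c x) =
      ∑ x ∈ I, a ^ ((x : ℕ) / q') * c x := by
    rw [← Finset.sum_attach I (fun x => a ^ ((x : ℕ) / q') * c x)]
    rfl
  have hsum2 : (∑ x ∈ I, a ^ ((x : ℕ) / q') * c x) =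
      ∑ t ∈ (Finset.range p).erase t0, a ^ t * c (e t) := by
    rw [hI]
    rw [Finset.sum_image (fun t1 h1 t2 h2 hee => hinj t1
      (Finset.mem_range.1 (Finset.mem_erase.1 h1).2) t2
      (Finset.mem_range.1 (Finset.mem_erase.1 h2).2) hee)]
    apply Finset.sum_congr rfl
    intro t htm
    have ht : t < p := Finset.mem_range.1 (Finset.mem_erase.1 htm).2
    congr 1
    rw [heval t ht]
    congr 1
    rw [Nat.add_mul_div_right _ _ hq'pos, Nat.div_eq_of_lt hjlt, zero_add]
  have hsplit : a ^ t0 * c (e t0) + ∑ t ∈ (Finset.range p).erase t0, a ^ t * c (e t) =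
      ∑ t ∈ Finset.range p, a ^ t * c (e t) :=
    Finset.add_sum_erase (Finset.range p) (fun t => a ^ t * c (e t))
      (Finset.mem_range.2 ht0lt)
  have hkey : ∑ t ∈ (Finset.range p).erase t0, a ^ t * c (e t) = -(a ^ t0 * c i) := by
    rw [het0] at hsplit
    rw [hpar] at hsplit
    linear_combination hsplit
  show c i = -(a ^ t0)⁻¹ * _
  rw [hsum1, hsum2, hkey]
  have hat0 : (a : F) ^ t0 ≠ 0 := pow_ne_zero _ hane
  field_simp

lemma polyOf_add {n : ℕ} (u v : Fin n → F) :
    polyOf (u + v) = polyOf u + polyOf v := by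
  rw [polyOf, polyOf, polyOf, ← Finset.sum_add_distrib]
  apply Finset.sum_congr rfl
  intro j _
  rw [Pi.add_apply, map_add, add_mul]

lemma polyOf_smul {n : ℕ} (r : F) (u : Fin n → F) :
    polyOf (r • u) = C r * polyOf u := by
  rw [polyOf, polyOf, Finset.mul_sum]
  apply Finset.sum_congr rfl
  intro j _
  rw [Pi.smul_apply, smul_eq_mul, map_mul, mul_assoc]

lemma polyOf_single {n : ℕ} (τ : Fin n) :
    polyOf (Pi.single τ (1 : F)) = X ^ (τ : ℕ) := by
  rw [polyOf, Finset.sum_eq_single τ]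
  · rw [Pi.single_eq_same, map_one, one_mul]
  · intro j _ hj
    rw [Pi.single_eq_of_ne hj, map_zero, zero_mul]
  · intro h; exact absurd (Finset.mem_univ _) h

lemma loc_lower {p : ℕ} [CharP F p] (hp : p.Prime) (hp2 : p ≠ 2) {s : ℕ} (hs : 2 ≤ s)
    {lam0 : F} (hl : lam0 ≠ 0) {r' : ℕ}
    (hr : hasAllSymbolLocality (Ci p 1 s (p ^ (s - 1) + 1) lam0) r') : p - 1 ≤ r' := by
  haveI : Fact p.Prime := ⟨hp⟩
  have hp3 : 3 ≤ p := by have := hp.two_le; omega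
  by_contra hcon
  push_neg at hcon
  -- basic numerology
  set q' := p ^ (s - 1) with hq'
  have hq'pos : 0 < q' := pow_pos hp.pos _
  have hq3 : 3 ≤ q' := le_trans hp3 (Nat.le_self_pow (by omega) p)
  have hps : p ^ s = q' * p := by
    conv_lhs => rw [show s = (s - 1) + 1 by omega]
    rw [pow_succ]
  have hq'lt : q' + 1 < p ^ s := by
    have h1 : q' * 3 ≤ q' * p := Nat.mul_le_mul_left _ hp3
    omega
  set n := 1 * p ^ s with hn
  have hnn : n = p ^ s := one_mul _
  have hnpos : 0 < n := by omega
  set i0 := q' + 1 with hi0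
  set k := p ^ s - q' - 1 with hk
  have hik : i0 + k = p ^ s := by omega
  have hk1 : 1 ≤ k := by
    have h1 : q' * 3 ≤ q' * p := Nat.mul_le_mul_left _ hp3
    omega
  set g : F[X] := (X - C lam0) ^ i0 with hg
  have hgmonic : g.Monic := (monic_X_sub_C lam0).pow i0
  have hgne : g ≠ 0 := hgmonic.ne_zero
  have hdegg : g.natDegree = i0 := by
    rw [hg, Polynomial.natDegree_pow, Polynomial.natDegree_X_sub_C, mul_one]
  -- the locality data at coordinate 0
  set i : Fin n := ⟨0, hnpos⟩ with hidef
  obtain ⟨I, hiI, hIcard, f, hf⟩ := hr i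
  have hIp : I.card ≤ p - 2 := by omega
  -- the encoding linear functionals
  set ψ : Fin n → ((Fin k → F) →ₗ[F] F) := fun l =>
    { toFun := fun u => (g * polyOf u).coeff (l : ℕ)
      map_add' := by
        intro u v
        show (g * polyOf (u + v)).coeff (l : ℕ) =
          (g * polyOf u).coeff (l : ℕ) + (g * polyOf v).coeff (l : ℕ)
        rw [polyOf_add, mul_add, Polynomial.coeff_add]
      map_smul' := by
        intro r u
        show (g * polyOf (r • u)).coeff (l : ℕ) = r • (g * polyOf u).coeff (l : ℕ)
        rw [polyOf_smul, smul_eq_mul,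
          show g * (C r * polyOf u) = C r * (g * polyOf u) from by ring,
          Polynomial.coeff_C_mul] } with hψ
  have hψval : ∀ (l : Fin n) (u : Fin k → F), ψ l u = (g * polyOf u).coeff (l : ℕ) :=
    fun l u => rfl
  by_cases hex : ∃ u : Fin k → F, (∀ l ∈ I, ψ l u = 0) ∧ ψ i u ≠ 0
  · -- a codeword vanishing on I but not at i : contradicts locality
    obtain ⟨u, huI, hui⟩ := hex
    set c : Fin n → F := fun j => (g * polyOf u).coeff (j : ℕ) with hc
    have hdegc : (g * polyOf u).natDegree < n := by
      calc (g * polyOf u).natDegree ≤ g.natDegree + (polyOf u).natDegree :=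
            Polynomial.natDegree_mul_le
        _ < i0 + k := by
            have := natDegree_polyOf_lt (by omega : 0 < k) u
            omega
        _ = n := by omega
    have hpc : polyOf c = g * polyOf u := by
      have : polyOf (fun j : Fin n => (g * polyOf u).coeff (j : ℕ)) = g * polyOf u := by
        ext t
        rw [coeff_polyOf]
        split_ifs with ht
        · rfl
        · exact (Polynomial.coeff_eq_zero_of_natDegree_lt (by omega)).symm
      exact this
    have hcmem : c ∈ Ci p 1 s (p ^ (s - 1) + 1) lam0 := by
      rw [mem_Ci_iff hp (by omega) lam0, hpc]
      exact Dvd.intro _ rfl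
    have h0mem : (0 : Fin n → F) ∈ Ci p 1 s (p ^ (s - 1) + 1) lam0 := by
      rw [mem_Ci_iff hp (by omega) lam0, (polyOf_eq_zero_iff 0).2 rfl]
      exact dvd_zero _
    have harg : (fun j : {x : Fin n // x ∈ I} => c j.1) =
        (fun j : {x : Fin n // x ∈ I} => (0 : Fin n → F) j.1) := by
      funext j
      have := huI j.1 j.2
      rw [hψval] at this
      exact this
    have h1 := hf c hcmem
    have h2 := hf 0 h0mem
    rw [harg, ← h2] at h1
    apply hui
    rw [hψval]
    exact h1
  · -- no such codeword : derive a sparse dual polynomial, contradiction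
    push_neg at hex
    have hker : (⨅ x : {x : Fin n // x ∈ I}, LinearMap.ker (ψ x.1)) ≤
        LinearMap.ker (ψ i) := by
      intro u hu
      rw [LinearMap.mem_ker]
      apply hex u
      intro l hl
      have := Submodule.mem_iInf
        (fun x : {x : Fin n // x ∈ I} => LinearMap.ker (ψ x.1)) |>.1 hu ⟨l, hl⟩
      rwa [LinearMap.mem_ker] at this
    have hspan := mem_span_of_iInf_ker_le_ker hker
    obtain ⟨α, hα⟩ := (Submodule.mem_span_range_iff_exists_fun F).1 hspan
    have hαeq : ∀ u : Fin k → F,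
        (∑ x : {x : Fin n // x ∈ I}, α x * ψ x.1 u) = ψ i u := by
      intro u
      have := congrArg (fun L : (Fin k → F) →ₗ[F] F => L u) hα
      simpa [LinearMap.sum_apply, LinearMap.smul_apply, smul_eq_mul] using this
    -- the reversed dual polynomial
    set H : F[X] := X ^ (n - 1) -
      ∑ x : {x : Fin n // x ∈ I}, C (α x) * X ^ (n - 1 - ((x.1 : Fin n) : ℕ)) with hH
    have hxne : ∀ x : {x : Fin n // x ∈ I}, 0 < ((x.1 : Fin n) : ℕ) := by
      intro x
      rcases Nat.eq_zero_or_pos ((x.1 : Fin n) : ℕ) with h | h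
      · exfalso
        apply hiI
        have : (x.1 : Fin n) = i := Fin.ext (by rw [h])
        rw [← this]
        exact x.2
      · exact h
    have hHcoeff : ∀ t, H.coeff t = (if t = n - 1 then 1 else 0) -
        ∑ x : {x : Fin n // x ∈ I},
          α x * (if t = n - 1 - ((x.1 : Fin n) : ℕ) then 1 else 0) := by
      intro t
      rw [hH, Polynomial.coeff_sub, Polynomial.coeff_X_pow, finset_sum_coeff]
      congr 1
      apply Finset.sum_congr rfl
      intro x _
      rw [Polynomial.coeff_C_mul, Polynomial.coeff_X_pow]
    have hHtop : H.coeff (n - 1) = 1 := by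
      rw [hHcoeff, if_pos rfl]
      have : ∀ x : {x : Fin n // x ∈ I},
          α x * (if n - 1 = n - 1 - ((x.1 : Fin n) : ℕ) then (1:F) else 0) = 0 := by
        intro x
        rw [if_neg, mul_zero]
        have h1 := hxne x
        have h2 := (x.1 : Fin n).2
        omega
      rw [Finset.sum_congr rfl (fun x _ => this x), Finset.sum_const_zero, sub_zero]
    have hHne : H ≠ 0 := fun h => by
      rw [h, Polynomial.coeff_zero] at hHtop
      exact one_ne_zero hHtop.symm
    have hHdeg : H.natDegree ≤ n - 1 := by
      rw [Polynomial.natDegree_le_iff_coeff_eq_zero]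
      intro N hN
      rw [hHcoeff, if_neg (by omega)]
      have : ∀ x : {x : Fin n // x ∈ I},
          α x * (if N = n - 1 - ((x.1 : Fin n) : ℕ) then (1:F) else 0) = 0 := by
        intro x
        rw [if_neg (by omega), mul_zero]
      rw [Finset.sum_congr rfl (fun x _ => this x), Finset.sum_const_zero, sub_zero]
    have hHsupp : H.support.card ≤ p - 1 := by
      have hsub : H.support ⊆ insert (n - 1)
          (Finset.univ.image (fun x : {x : Fin n // x ∈ I} => n - 1 - ((x.1 : Fin n) : ℕ))) := by
        intro t ht
        rw [Polynomial.mem_support_iff] at ht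
        by_contra hnot
        rw [Finset.mem_insert] at hnot
        push_neg at hnot
        obtain ⟨h1, h2⟩ := hnot
        apply ht
        rw [hHcoeff, if_neg h1]
        have : ∀ x : {x : Fin n // x ∈ I},
            α x * (if t = n - 1 - ((x.1 : Fin n) : ℕ) then (1:F) else 0) = 0 := by
          intro x
          rw [if_neg, mul_zero]
          intro he
          exact h2 (Finset.mem_image.2 ⟨x, Finset.mem_univ _, he.symm⟩)
        rw [Finset.sum_congr rfl (fun x _ => this x), Finset.sum_const_zero, sub_zero]
      calc H.support.card ≤ _ := Finset.card_le_card hsub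
        _ ≤ (Finset.univ.image
              (fun x : {x : Fin n // x ∈ I} => n - 1 - ((x.1 : Fin n) : ℕ))).card + 1 :=
            Finset.card_insert_le _ _
        _ ≤ Fintype.card {x : Fin n // x ∈ I} + 1 := by
            have := Finset.card_image_le (s := (Finset.univ : Finset {x : Fin n // x ∈ I}))
              (f := fun x => n - 1 - ((x.1 : Fin n) : ℕ))
            simp only [Finset.card_univ] at this
            omega
        _ = I.card + 1 := by rw [Fintype.card_coe]
        _ ≤ p - 1 := by omega
    -- coefficients of g * H vanish in the range [i0, n-1]
    have hGcoeff : ∀ t < k, (g * H).coeff (n - 1 - t) = 0 := by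
      intro t ht
      set τ : Fin k := ⟨t, ht⟩ with hτ
      have hαt := hαeq (Pi.single τ (1 : F))
      have hψsingle : ∀ l : Fin n, ψ l (Pi.single τ (1 : F)) =
          if t ≤ (l : ℕ) then g.coeff ((l : ℕ) - t) else 0 := by
        intro l
        rw [hψval, polyOf_single, show ((τ : Fin k) : ℕ) = t from rfl,
          Polynomial.coeff_mul_X_pow']
      have hexpand : g * H = g * X ^ (n - 1) -
          ∑ x : {x : Fin n // x ∈ I}, C (α x) * (g * X ^ (n - 1 - ((x.1 : Fin n) : ℕ))) := by
        rw [hH, mul_sub, Finset.mul_sum]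
        congr 1
        apply Finset.sum_congr rfl
        intro x _
        ring
      rw [hexpand, Polynomial.coeff_sub, finset_sum_coeff]
      have hmain : (g * X ^ (n - 1)).coeff (n - 1 - t) =
          if t ≤ (i : ℕ) then g.coeff ((i : ℕ) - t) else 0 := by
        rw [Polynomial.coeff_mul_X_pow']
        have hival : ((i : Fin n) : ℕ) = 0 := rfl
        rw [hival]
        by_cases ht0 : t = 0
        · subst ht0
          rw [if_pos (by omega), if_pos (by omega)]
          congr 1
          omega
        · rw [if_neg (by omega), if_neg (by omega)]
      have hterm : ∀ x : {x : Fin n // x ∈ I},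
          (C (α x) * (g * X ^ (n - 1 - ((x.1 : Fin n) : ℕ)))).coeff (n - 1 - t) =
          α x * ψ x.1 (Pi.single τ (1 : F)) := by
        intro x
        rw [Polynomial.coeff_C_mul, Polynomial.coeff_mul_X_pow', hψsingle]
        congr 1
        have hx1 := (x.1 : Fin n).2
        have hx2 := hxne x
        by_cases hc1 : t ≤ ((x.1 : Fin n) : ℕ)
        · rw [if_pos (by omega), if_pos hc1]
          congr 1
          omega
        · rw [if_neg (by omega), if_neg hc1]
      rw [hmain, Finset.sum_congr rfl (fun x _ => hterm x), hαt, hψsingle, sub_self]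
    -- decompose g * H
    set G : F[X] := g * H with hG
    have hGne : G ≠ 0 := mul_ne_zero hgne hHne
    have hdegG : G.natDegree ≤ i0 + (n - 1) := by
      calc G.natDegree ≤ g.natDegree + H.natDegree := Polynomial.natDegree_mul_le
        _ ≤ i0 + (n - 1) := by omega
    have hXn : ((X : F[X]) ^ n).Monic := monic_X_pow n
    set Q := G /ₘ (X ^ n) with hQ
    set A := G %ₘ (X ^ n) with hA
    have hQA : X ^ n * Q + A = G := by
      rw [hQ, hA]
      have := Polynomial.modByMonic_add_div G (X ^ n)
      linear_combination this
    have hdegA : A.natDegree < n := by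
      by_cases hA0 : A = 0
      · rw [hA0]; simpa using hnpos
      · have h1 := Polynomial.degree_modByMonic_lt G hXn
        rw [Polynomial.degree_X_pow] at h1
        exact (Polynomial.natDegree_lt_iff_degree_lt hA0).2 (by exact_mod_cast h1)
    have hdegQ : Q.natDegree ≤ i0 - 1 := by
      rw [hQ, Polynomial.natDegree_divByMonic G hXn]
      rw [Polynomial.natDegree_X_pow]
      omega
    have hAco : ∀ d, i0 ≤ d → A.coeff d = 0 := by
      intro d hd
      by_cases hdn : d < n
      · have h1 : A.coeff d = G.coeff d - (X ^ n * Q).coeff d := by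
          rw [← hQA, Polynomial.coeff_add]
          ring
        have h4 : G.coeff d = 0 := by
          have h3 : n - 1 - (n - 1 - d) = d := by omega
          rw [← h3]
          exact hGcoeff _ (by omega)
        rw [h1, h4, Polynomial.coeff_X_pow_mul', if_neg (by omega)]
        simp
      · exact Polynomial.coeff_eq_zero_of_natDegree_lt (by omega)
    have hdegA' : A.natDegree < i0 ∨ A = 0 := by
      by_cases hA0 : A = 0
      · right; exact hA0
      · left
        by_contra hcon2
        push_neg at hcon2
        have := Polynomial.coeff_ne_zero_of_eq_degree
          (Polynomial.degree_eq_natDegree hA0)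
        exact this (hAco _ hcon2)
    -- W = C lam * Q + A is divisible by g but has degree < deg g, so W = 0
    set lam := lam0 ^ p ^ s with hlam
    set W : F[X] := C lam * Q + A with hW
    have hfact : (X : F[X]) ^ n - C lam = (X - C lam0) ^ (p ^ s) := by
      rw [hnn, hlam, sub_pow_char_pow, map_pow]
    have hGW : G = (X ^ n - C lam) * Q + W := by
      rw [hW]
      linear_combination (hQA).symm
    have hgdvdXn : g ∣ (X ^ n - C lam) := by
      rw [hfact, hg]
      exact pow_dvd_pow _ (by omega)
    have hgW : g ∣ W := by
      have h1 : g ∣ G := Dvd.intro _ rfl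
      have h2 : g ∣ (X ^ n - C lam) * Q := hgdvdXn.mul_right Q
      have h3 : W = G - (X ^ n - C lam) * Q := by rw [hGW]; ring
      rw [h3]
      exact dvd_sub h1 h2
    have hdegW : W = 0 ∨ W.natDegree < i0 := by
      by_cases hW0 : W = 0
      · left; exact hW0
      · right
        calc W.natDegree ≤ max (C lam * Q).natDegree A.natDegree := by
              rw [hW]; exact Polynomial.natDegree_add_le _ _
          _ < i0 := by
              have h1 : (C lam * Q).natDegree ≤ Q.natDegree := by
                calc (C lam * Q).natDegree ≤ (C lam).natDegree + Q.natDegree :=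
                      Polynomial.natDegree_mul_le
                  _ = Q.natDegree := by rw [Polynomial.natDegree_C, zero_add]
              rcases hdegA' with h2 | h2
              · have := max_lt (lt_of_le_of_lt h1 (by omega)) h2
                exact this
              · rw [h2]
                simp only [Polynomial.natDegree_zero]
                have := lt_of_le_of_lt h1 (show Q.natDegree < i0 by omega)
                omega
    have hW0 : W = 0 := by
      rcases hdegW with h | h
      · exact h
      · by_contra hWne
        apply hWne
        apply Polynomial.eq_zero_of_dvd_of_degree_lt hgW
        rw [Polynomial.degree_eq_natDegree hWne, Polynomial.degree_eq_natDegree hgne,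
          hdegg]
        exact_mod_cast h
    have hGfact : G = (X - C lam0) ^ (p ^ s) * Q := by
      rw [hGW, hW0, add_zero, hfact]
    have hQne : Q ≠ 0 := by
      intro h
      rw [h, mul_zero] at hGfact
      exact hGne hGfact
    -- root multiplicities
    have hm1 : G.rootMultiplicity lam0 = i0 + H.rootMultiplicity lam0 := by
      rw [hG, Polynomial.rootMultiplicity_mul (hG ▸ hGne)]
      congr 1
      rw [hg]
      exact Polynomial.rootMultiplicity_X_sub_C_pow lam0 i0
    have hm2 : p ^ s ≤ G.rootMultiplicity lam0 := by
      rw [hGfact, Polynomial.rootMultiplicity_mul (hGfact ▸ hGne)]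
      rw [Polynomial.rootMultiplicity_X_sub_C_pow lam0 (p ^ s)]
      omega
    have hmH : k ≤ H.rootMultiplicity lam0 := by omega
    -- the sparsity bound gives a contradiction
    have hHdeg2 : H.natDegree < p ^ ((s - 1) + 1) := by
      have : (s - 1) + 1 = s := by omega
      rw [this]
      omega
    have hbound := multiplicity_bound hp hl ((s - 1) + H.support.card) (s - 1)
      H hHne (le_refl _) hHdeg2
    rw [← hq'] at hbound
    have hfin : (H.support.card - 1) * q' ≤ (p - 2) * q' :=
      Nat.mul_le_mul_right _ (by omega)
    have hlast : (p - 2) * q' + 2 * q' = q' * p := by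
      have h1 : ((p - 2) + 2) * q' = p * q' := by congr 1; omega
      rw [add_mul] at h1
      rw [Nat.mul_comm q' p]
      omega
    omega

end Aux4

/-- For odd prime `p` and `s ≥ 2`, the code `C_{p^{s−1}+1}(1, p^s, λ₀)` has length
`p^s`, dimension `p^s − p^{s−1} − 1`, minimum distance `3` and minimum locality `p − 1`; in
particular it is an optimal LRC. -/
theorem stmt4 {p m : ℕ} (hp : p.Prime) (hp2 : p ≠ 2) (hm : 1 ≤ m)
    {F : Type} [Field F] [Fintype F] [DecidableEq F] (hcard : Fintype.card F = p ^ m)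
    (s : ℕ) (hs : 2 ≤ s) (lam0 : F) (hlam0 : lam0 ≠ 0) :
    Nat.card (Ci p 1 s (p ^ (s - 1) + 1) lam0) = (p ^ m) ^ (p ^ s - p ^ (s - 1) - 1) ∧
    minDistIs (Ci p 1 s (p ^ (s - 1) + 1) lam0) 3 ∧
    minLocalityIs (Ci p 1 s (p ^ (s - 1) + 1) lam0) (p - 1) ∧
    (3 : ℤ) = (p ^ s : ℤ) - ((p ^ s - p ^ (s - 1) - 1 : ℕ) : ℤ)
      - (nceil (p ^ s - p ^ (s - 1) - 1) (p - 1) : ℤ) + 2 := by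
  haveI : CharP F p := charF hp hm hcard
  have hp3 : 3 ≤ p := by
    have h2 := hp.two_le
    rcases Nat.lt_or_ge p 3 with h | h
    · interval_cases p
      · exact absurd rfl hp2
    · exact h
  have hs1 : 1 ≤ s := by omega
  have hle : p ^ (s - 1) + 1 ≤ p ^ s := pow_le_pow_s hp.two_le hs1
  have hq3 : 3 ≤ p ^ (s - 1) := le_trans hp3 (Nat.le_self_pow (by omega) p)
  have hps : p ^ s = p ^ (s - 1) * p := by
    conv_lhs => rw [show s = (s - 1) + 1 by omega]
    rw [pow_succ]
  refine ⟨?_, ?_, ?_, ?_⟩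
  · rw [card_Ci hp hp3 hs1 lam0, hcard]
  · constructor
    · obtain ⟨c, hm3, hne, hw⟩ := exists_wt3 hp hp2 hs hlam0
      exact ⟨c, hm3, hne, hw⟩
    · rintro w ⟨c, hc, hne, rfl⟩
      exact wt_lower hp hs hlam0 hc hne
  · exact ⟨loc_upper hp hs hlam0, fun r' hr' => loc_lower hp hp2 hs hlam0 hr'⟩
  · have h1 : (p - 1) * p ^ (s - 1) = p ^ s - p ^ (s - 1) := by
      have h2 : ((p - 1) + 1) * p ^ (s - 1) = p * p ^ (s - 1) := by congr 1; omega
      rw [add_mul, one_mul] at h2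
      have h3 : p * p ^ (s - 1) = p ^ (s - 1) * p := Nat.mul_comm _ _
      omega
    have hnceil : nceil (p ^ s - p ^ (s - 1) - 1) (p - 1) = p ^ (s - 1) := by
      have h4 : (p - 1) * p ^ (s - 1) = p ^ (s - 1) * (p - 1) := Nat.mul_comm _ _
      have h2 : (p ^ s - p ^ (s - 1) - 1) + (p - 1) - 1 =
          (p - 3) + p ^ (s - 1) * (p - 1) := by omega
      rw [nceil, h2, Nat.add_mul_div_right _ _ (by omega : 0 < p - 1),
        Nat.div_eq_of_lt (by omega : p - 3 < p - 1), zero_add]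
    have e1 : ((p ^ s - p ^ (s - 1) - 1 : ℕ) : ℤ) =
        ((p ^ s : ℕ) : ℤ) - ((p ^ (s - 1) : ℕ) : ℤ) - 1 := by omega
    have e2 : ((p ^ s : ℕ) : ℤ) = (p : ℤ) ^ s := by push_cast; ring
    have e3 : ((p ^ (s - 1) : ℕ) : ℤ) = (p : ℤ) ^ (s - 1) := by push_cast; ring
    rw [hnceil, e1, e2, e3]
    ring
end

section
/- Let p be an odd prime, m ≥ 1, s ≥ 2, and let λ_0 be a nonzero element of F_{p^m}. Then the code C_2(1, p^s, λ_0) is a linear code over F_{p^m} of length p^s, dimension p^s − 2, minimum distance 2, and minimum locality p^s − p^{s−1} − 1; in particular it is an optimal LRC, i.e., 2 = p^s − (p^s − 2) − ⌈(p^s − 2)/(p^s − p^{s−1} − 1)⌉ + 2. -/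
open Polynomial

variable {F : Type} [Field F] [Fintype F] [DecidableEq F]

/-!
In characteristic `p` we have `x ^ p ^ s - λ₀ ^ p ^ s = (x - λ₀) ^ p ^ s`, so the code consists of
the coefficient vectors `c` whose polynomial has a double root at `λ₀`, i.e. the kernel of the
syndrome map `c ↦ (∑ cⱼ λ₀ʲ, ∑ j cⱼ λ₀ʲ)` onto `F²`; hence its dimension is `p ^ s - 2`.
No nonzero vector of weight one lies in the kernel, while `(x - λ₀) ^ p = x ^ p - λ₀ ^ p` is a
codeword of weight two. For locality, the parity check `∑ (j - i - 1) λ₀ʲ cⱼ = 0` recovers `cᵢ`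
from the `p ^ s - p ^ (s - 1) - 1` other positions `j ≢ i + 1 (mod p)`. Conversely, a recovery
set for a position `i` of smaller size misses at least `p ^ (s - 1) + 1` positions, among them two
positions `j ≢ k (mod p)`, and some codeword supported on `{i, j, k}` with `cᵢ ≠ 0` defeats it.
-/

open Finset

theorem Ideal.mem_span_pair_iff_dvd_of_dvd {R : Type*} [CommRing R] {g h x : R} (hgh : g ∣ h) :
    x ∈ Ideal.span {g, h} ↔ g ∣ x := by
  rw [Set.pair_comm, Ideal.span, Submodule.span_insert_eq_span (Ideal.mem_span_singleton.mpr hgh),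
    ← Ideal.span, Ideal.mem_span_singleton]

theorem Polynomial.sq_dvd_iff_isRoot_and_isRoot_derivative {K : Type*} [Field K] (P : K[X])
    (a : K) : (X - C a) ^ 2 ∣ P ↔ P.IsRoot a ∧ P.derivative.IsRoot a := by
  rcases eq_or_ne P 0 with rfl | hP
  · simp
  · rw [← le_rootMultiplicity_iff hP, ← one_lt_rootMultiplicity_iff_isRoot hP]
    rfl

theorem Fin.card_filter_val_eq_count (n : ℕ) (P : ℕ → Prop) [DecidablePred P] :
    #{j : Fin n | P j} = Nat.count P n := by
  rw [Nat.count_eq_card_filter_range, ← Nat.Iio_eq_range, ← Fin.map_valEmbedding_univ, filter_map,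
    card_map]
  rfl

theorem card_filter_natCast_eq {R : Type*} [AddGroupWithOne R] [DecidableEq R] {p n : ℕ}
    [CharP R p] (hp : p ≠ 0) (hpn : p ∣ n) (x : ℕ) : #{j : Fin n | ((j : ℕ) : R) = x} = n / p := by
  calc #{j : Fin n | ((j : ℕ) : R) = x} = Nat.count (· ≡ x [MOD p]) n := by
        simp [← Fin.card_filter_val_eq_count, CharP.natCast_eq_natCast R p]
    _ = n / p := by
        simp [Nat.count_modEq_card _ (Nat.pos_of_ne_zero hp), Nat.mod_eq_zero_of_dvd hpn]

theorem exists_natCast_ne_of_card_lt {R : Type*} [AddGroupWithOne R] [DecidableEq R] {p n : ℕ}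
    [CharP R p] (hp : p ≠ 0) (hpn : p ∣ n) {U : Finset (Fin n)} (hU : n / p < #U) :
    ∃ j ∈ U, ∃ k ∈ U, ((j : ℕ) : R) ≠ ((k : ℕ) : R) := by
  obtain ⟨u, hu⟩ := card_pos.mp (Nat.zero_lt_of_lt hU)
  by_contra! hsame
  have hsub : U ⊆ univ.filter fun j : Fin n ↦ ((j : ℕ) : R) = (u : ℕ) := fun j hj ↦
    mem_filter.mpr ⟨mem_univ j, hsame j hj u hu⟩
  have := card_le_card hsub
  rw [card_filter_natCast_eq hp hpn] at this
  omega

section Hamming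

variable {ι β : Type*} [Fintype ι] [DecidableEq ι] [AddZeroClass β] [DecidableEq β]

theorem hammingNorm_single_add_single {i j : ι} (hij : i ≠ j) {x y : β} (hx : x ≠ 0)
    (hy : y ≠ 0) : hammingNorm (Pi.single i x + Pi.single j y : ι → β) = 2 := by
  rw [hammingNorm, ← card_pair hij]
  congr 1
  ext l
  by_cases hli : l = i
  · subst hli; simp [hij, hx]
  · by_cases hlj : l = j
    · subst hlj; simp [hli, hy]
    · simp [hli, hlj]

theorem eq_single_of_hammingNorm_le_one {c : ι → β} (hc : hammingNorm c ≤ 1) {i : ι}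
    (hi : c i ≠ 0) : c = Pi.single i (c i) := by
  ext l
  by_cases hli : l = i
  · subst hli; simp
  · rw [Pi.single_eq_of_ne hli]
    by_contra hl
    have : 1 < hammingNorm c := one_lt_card.mpr ⟨l, by simpa using hl, i, by simpa using hi, hli⟩
    omega

end Hamming

theorem symbolLocality_of_dotProduct_eq_zero {K : Type} [Field K] [DecidableEq K] {n : ℕ}
    {C : Set (Fin n → K)} {w : Fin n → K} (hw : ∀ c ∈ C, w ⬝ᵥ c = 0) {i : Fin n} (hi : w i ≠ 0) :
    symbolLocality C i (#{j | w j ≠ 0} - 1) := by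
  set S : Finset (Fin n) := {j | w j ≠ 0}
  have hiS : i ∈ S := mem_filter.mpr ⟨mem_univ i, hi⟩
  refine ⟨S.erase i, notMem_erase i S, (card_erase_of_mem hiS).le,
    fun v ↦ -(w i)⁻¹ * ∑ j : S.erase i, w j * v j, fun c hc ↦ ?_⟩
  have hsupp : w i * c i + ∑ j ∈ S.erase i, w j * c j = 0 := by
    rw [add_sum_erase S (fun j ↦ w j * c j) hiS, ← hw c hc, dotProduct]
    exact sum_subset (subset_univ S) fun j _ hj ↦ by simp [S] at hj; simp [hj]
  dsimp only
  rw [sum_coe_sort (S.erase i) fun j ↦ w j * c j]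
  field_simp
  linear_combination hsupp

theorem exists_forall_eq_zero_of_symbolLocality {M : Type} [Zero M] {n : ℕ} {C : Set (Fin n → M)}
    {i : Fin n} {r : ℕ} (h : symbolLocality C i r) (h0 : 0 ∈ C) :
    ∃ I : Finset (Fin n), i ∉ I ∧ #I ≤ r ∧ ∀ c ∈ C, (∀ j ∈ I, c j = 0) → c i = 0 := by
  obtain ⟨I, hiI, hI, f, hf⟩ := h
  refine ⟨I, hiI, hI, fun c hc hcI ↦ ?_⟩
  have hcI' : (fun j : I ↦ c j) = fun j : I ↦ (0 : Fin n → M) j := funext fun j ↦ hcI j j.2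
  rw [hf c hc, hcI', ← hf 0 h0, Pi.zero_apply]

theorem nceil_sub_two_sub_sub_one {n m : ℕ} (hm : 2 ≤ m) (hmn : 2 * m ≤ n) :
    nceil (n - 2) (n - m - 1) = 2 := by
  unfold nceil
  apply Nat.div_eq_of_lt_le <;> omega

section Syndrome

variable {K : Type} [Field K]

def syndrome (n : ℕ) (a : K) : (Fin n → K) →ₗ[K] K × K :=
  Fintype.linearCombination K fun j : Fin n ↦ (a ^ (j : ℕ), ((j : ℕ) : K) * a ^ (j : ℕ))

variable {n : ℕ} {a : K}

theorem syndrome_apply (c : Fin n → K) :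
    syndrome n a c = (∑ j, c j * a ^ (j : ℕ), ∑ j, c j * ((j : ℕ) : K) * a ^ (j : ℕ)) := by
  ext <;> simp [syndrome, Fintype.linearCombination_apply, Prod.fst_sum, Prod.snd_sum, mul_assoc]

theorem syndrome_single (ha : a ≠ 0) (j : Fin n) (u : K) :
    syndrome n a (Pi.single j (u / a ^ (j : ℕ))) = (u, u * (j : ℕ)) := by
  have : a ^ (j : ℕ) ≠ 0 := pow_ne_zero _ ha
  simp only [syndrome, Fintype.linearCombination_apply_single, Prod.smul_mk, smul_eq_mul]
  ext <;> field_simp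

theorem syndrome_fst_eq_eval (c : Fin n → K) :
    (syndrome n a c).1 = (∑ j : Fin n, C (c j) * X ^ (j : ℕ)).eval a := by
  simp [syndrome_apply, eval_finsetSum]

theorem syndrome_snd_eq_mul_eval_derivative (c : Fin n → K) :
    (syndrome n a c).2 = a * (derivative (∑ j : Fin n, C (c j) * X ^ (j : ℕ))).eval a := by
  simp only [syndrome_apply, derivative_sum, derivative_C_mul_X_pow, eval_finsetSum,
    mul_sum]
  refine sum_congr rfl fun j _ ↦ ?_
  rcases (j : ℕ) with _ | k
  · simp
  · simp [pow_succ]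
    ring

theorem Ci_two_eq_ker_syndrome {p s : ℕ} [Fact p.Prime] [CharP K p] (hs : 1 ≤ s)
    (ha : a ≠ 0) : Ci p 1 s 2 a = (LinearMap.ker (syndrome (1 * p ^ s) a) : Set _) := by
  have hfrob : (X ^ (1 * p ^ s) - C (a ^ p ^ s) : K[X]) = (X - C a) ^ p ^ s := by
    rw [one_mul, sub_pow_char_pow, map_pow]
  have h2 : 2 ≤ p ^ s :=
    (Fact.out : p.Prime).two_le.trans (Nat.le_self_pow (by omega) p)
  ext c
  rw [Ci, codeOfGen, Set.mem_ofPred_eq, pow_one, hfrob,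
    Ideal.mem_span_pair_iff_dvd_of_dvd (pow_dvd_pow _ h2),
    sq_dvd_iff_isRoot_and_isRoot_derivative, SetLike.mem_coe, LinearMap.mem_ker, IsRoot, IsRoot,
    ← mul_eq_zero_iff_left ha (b := eval a (derivative _)), ← syndrome_snd_eq_mul_eval_derivative,
    ← syndrome_fst_eq_eval, Prod.ext_iff]
  rfl

theorem syndrome_surjective (hn : 2 ≤ n) (ha : a ≠ 0) : Function.Surjective (syndrome n a) := by
  rintro ⟨x, y⟩
  let j₀ : Fin n := ⟨0, by omega⟩
  let j₁ : Fin n := ⟨1, by omega⟩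
  refine ⟨Pi.single j₀ ((x - y) / a ^ (j₀ : ℕ)) + Pi.single j₁ (y / a ^ (j₁ : ℕ)), ?_⟩
  rw [map_add, syndrome_single ha, syndrome_single ha]
  simp [j₀, j₁]

theorem finrank_ker_syndrome (hn : 2 ≤ n) (ha : a ≠ 0) :
    Module.finrank K (LinearMap.ker (syndrome n a)) = n - 2 := by
  have h := LinearMap.finrank_range_add_finrank_ker (syndrome n a)
  rw [LinearMap.range_eq_top.mpr (syndrome_surjective hn ha), finrank_top, Module.finrank_prod,
    Module.finrank_self, Module.finrank_fin_fun] at h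
  omega

theorem card_ker_syndrome [Fintype K] (hn : 2 ≤ n) (ha : a ≠ 0) :
    Nat.card (LinearMap.ker (syndrome n a)) = Fintype.card K ^ (n - 2) := by
  rw [Module.natCard_eq_pow_finrank (K := K), finrank_ker_syndrome hn ha, Nat.card_eq_fintype_card]

theorem exists_mem_ker_syndrome_apply_ne_zero (ha : a ≠ 0) {i j k : Fin n} (hji : j ≠ i)
    (hki : k ≠ i) (hjk : ((j : ℕ) : K) ≠ ((k : ℕ) : K)) :
    ∃ c ∈ LinearMap.ker (syndrome n a), c i ≠ 0 ∧ ∀ l, l ≠ i → l ≠ j → l ≠ k → c l = 0 := by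
  set x : Fin n → K := fun l ↦ ((l : ℕ) : K)
  -- `(x j - x k, x k - x i, x i - x j)` is orthogonal to both `(1, 1, 1)` and `(x i, x j, x k)`
  refine ⟨Pi.single i ((x j - x k) / a ^ (i : ℕ)) + Pi.single j ((x k - x i) / a ^ (j : ℕ)) +
    Pi.single k ((x i - x j) / a ^ (k : ℕ)), ?_, ?_, fun l hli hlj hlk ↦ by simp [hli, hlj, hlk]⟩
  · rw [LinearMap.mem_ker, map_add, map_add, syndrome_single ha, syndrome_single ha,
      syndrome_single ha]
    ext <;> simp [x]
    ring
  · simp [x, hji.symm, hki.symm, sub_eq_zero, hjk, ha]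

variable [DecidableEq K] {p : ℕ} [CharP K p]

theorem minDistIs_ker_syndrome (hp : p ≠ 0) (hpn : p < n) (ha : a ≠ 0) :
    minDistIs (LinearMap.ker (syndrome n a) : Set (Fin n → K)) 2 := by
  let j₀ : Fin n := ⟨0, by omega⟩
  let jp : Fin n := ⟨p, hpn⟩
  have hj : j₀ ≠ jp := by simp [j₀, jp, Fin.ext_iff, Ne.symm hp]
  -- the coefficient vector of `(X - a) ^ p / a ^ p = X ^ p / a ^ p - 1`
  set c : Fin n → K := Pi.single j₀ (-1 / a ^ (j₀ : ℕ)) + Pi.single jp (1 / a ^ (jp : ℕ))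
  have hc : hammingNorm c = 2 :=
    hammingNorm_single_add_single hj (by simp [ha]) (by simp [ha])
  refine ⟨⟨c, ?_, hammingNorm_ne_zero_iff.mp (by omega), hc⟩, ?_⟩
  · rw [SetLike.mem_coe, LinearMap.mem_ker, map_add, syndrome_single ha, syndrome_single ha]
    simp [j₀, jp]
  · rintro _ ⟨c, hc, hne, rfl⟩
    by_contra! hlt
    obtain ⟨i, hi⟩ := Function.ne_iff.mp hne
    have hsingle : c = Pi.single i ((c i * a ^ (i : ℕ)) / a ^ (i : ℕ)) := by
      rw [mul_div_cancel_right₀ _ (pow_ne_zero _ ha)]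
      exact eq_single_of_hammingNorm_le_one (by omega) hi
    rw [SetLike.mem_coe, LinearMap.mem_ker, hsingle, syndrome_single ha] at hc
    exact mul_ne_zero hi (pow_ne_zero _ ha) (congrArg Prod.fst hc)

theorem card_filter_natCast_sub_mul_pow_ne_zero (hp : p ≠ 0) (hpn : p ∣ n) (ha : a ≠ 0)
    (x : ℕ) : #{j : Fin n | (((j : ℕ) : K) - x) * a ^ (j : ℕ) ≠ 0} = n - n / p := by
  have h := card_filter_add_card_filter_not
    (s := (univ : Finset (Fin n))) (p := fun j ↦ ((j : ℕ) : K) = x)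
  rw [card_filter_natCast_eq hp hpn, card_univ, Fintype.card_fin] at h
  simp only [ne_eq, mul_eq_zero, pow_eq_zero_iff', ha, false_and, or_false, sub_eq_zero]
  omega

theorem minLocalityIs_ker_syndrome (hp : p ≠ 0) (hpn : p ∣ n) (hn : 0 < n) (ha : a ≠ 0) :
    minLocalityIs (LinearMap.ker (syndrome n a) : Set (Fin n → K)) (n - n / p - 1) := by
  constructor
  · intro i
    -- a parity check vanishing exactly at the positions `j ≡ i + 1 (mod p)`
    let w : Fin n → K := fun j ↦ (((j : ℕ) : K) - ((i + 1 : ℕ) : K)) * a ^ (j : ℕ)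
    have hw : ∀ c ∈ (LinearMap.ker (syndrome n a) : Set (Fin n → K)), w ⬝ᵥ c = 0 := by
      intro c hc
      have hc' : syndrome n a c = 0 := hc
      rw [syndrome_apply, Prod.mk_eq_zero] at hc'
      calc w ⬝ᵥ c = ∑ j, c j * ((j : ℕ) : K) * a ^ (j : ℕ)
            - ((i + 1 : ℕ) : K) * ∑ j, c j * a ^ (j : ℕ) := by
            simp only [dotProduct, mul_sum, ← sum_sub_distrib, w]
            exact sum_congr rfl fun j _ ↦ by ring
        _ = 0 := by rw [hc'.1, hc'.2, mul_zero, sub_zero]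
    have hwi : w i ≠ 0 := by simp [w, ha]
    have := symbolLocality_of_dotProduct_eq_zero hw hwi
    rwa [card_filter_natCast_sub_mul_pow_ne_zero hp hpn ha] at this
  · intro r hr
    by_contra! hlt
    let i₀ : Fin n := ⟨0, hn⟩
    obtain ⟨I, hi₀I, hI, hvanish⟩ :=
      exists_forall_eq_zero_of_symbolLocality (hr i₀) (Submodule.zero_mem _)
    have hU : n / p < #(insert i₀ I)ᶜ := by
      rw [card_compl, Fintype.card_fin]
      have := card_insert_le i₀ I
      omega
    obtain ⟨j, hj, k, hk, hjk⟩ := exists_natCast_ne_of_card_lt (R := K) hp hpn hU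
    simp only [mem_compl, mem_insert, not_or] at hj hk
    obtain ⟨c, hc, hci₀, hc0⟩ := exists_mem_ker_syndrome_apply_ne_zero ha hj.1 hk.1 hjk
    exact hci₀ (hvanish c hc fun l hl ↦
      hc0 l (ne_of_mem_of_not_mem hl hi₀I) (ne_of_mem_of_not_mem hl hj.2)
        (ne_of_mem_of_not_mem hl hk.2))

end Syndrome

theorem stmt6_general {p m : ℕ} (hp : p.Prime)
    {F : Type} [Field F] [Fintype F] [DecidableEq F] (hcard : Fintype.card F = p ^ m)
    (s : ℕ) (hs : 2 ≤ s) (lam0 : F) (hlam0 : lam0 ≠ 0) :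
    Nat.card (Ci p 1 s 2 lam0) = (p ^ m) ^ (p ^ s - 2) ∧
    minDistIs (Ci p 1 s 2 lam0) 2 ∧
    minLocalityIs (Ci p 1 s 2 lam0) (p ^ s - p ^ (s - 1) - 1) ∧
    (2 : ℤ) = (p ^ s : ℤ) - ((p ^ s - 2 : ℕ) : ℤ)
      - (nceil (p ^ s - 2) (p ^ s - p ^ (s - 1) - 1) : ℤ) + 2 := by
  have : Fact p.Prime := ⟨hp⟩
  have : CharP F p := charP_of_card_eq_prime_pow hcard
  have hps : p ^ s = p * p ^ (s - 1) := by rw [← pow_succ']; congr; omega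
  have hp_two : 2 ≤ p := hp.two_le
  have hpp : p ≤ p ^ (s - 1) := Nat.le_self_pow (by omega) p
  have hdiv : 1 * p ^ s / p = p ^ (s - 1) := by
    rw [one_mul, hps, Nat.mul_div_cancel_left _ hp.pos]
  rw [Ci_two_eq_ker_syndrome (by omega) hlam0]
  refine ⟨?_, minDistIs_ker_syndrome hp.ne_zero ?_ hlam0, ?_, ?_⟩
  · exact (card_ker_syndrome (by nlinarith) hlam0).trans (by rw [hcard, one_mul])
  · nlinarith
  · convert minLocalityIs_ker_syndrome (n := 1 * p ^ s) hp.ne_zero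
      (dvd_mul_of_dvd_right (dvd_pow_self p (by omega)) 1) (by positivity) hlam0 using 1
    rw [hdiv, one_mul]
  · rw [nceil_sub_two_sub_sub_one (by omega) (by nlinarith), Nat.cast_sub (by nlinarith)]
    push_cast
    ring

/-- For odd prime `p` and `s ≥ 2`, the code `C_2(1, p^s, λ₀)` has length `p^s`,
dimension `p^s − 2`, minimum distance `2` and minimum locality `p^s − p^{s−1} − 1`; in
particular it is an optimal LRC. -/
theorem stmt6 {p m : ℕ} (hp : p.Prime) (hp2 : p ≠ 2) (hm : 1 ≤ m)
    {F : Type} [Field F] [Fintype F] [DecidableEq F] (hcard : Fintype.card F = p ^ m)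
    (s : ℕ) (hs : 2 ≤ s) (lam0 : F) (hlam0 : lam0 ≠ 0) :
    Nat.card (Ci p 1 s 2 lam0) = (p ^ m) ^ (p ^ s - 2) ∧
    minDistIs (Ci p 1 s 2 lam0) 2 ∧
    minLocalityIs (Ci p 1 s 2 lam0) (p ^ s - p ^ (s - 1) - 1) ∧
    (2 : ℤ) = (p ^ s : ℤ) - ((p ^ s - 2 : ℕ) : ℤ)
      - (nceil (p ^ s - 2) (p ^ s - p ^ (s - 1) - 1) : ℤ) + 2 :=
  stmt6_general hp hcard s hs lam0 hlam0
end
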